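/- arXiv:math/0410616 — 6 statements merged into one kernel-verified Lean document; each statement's English description precedes it below -/
import Mathlib

section
/- In the lamplighter group L₂ = ℤ₂ ≀ ℤ with generating set {a, t}, for n ≥ 1 the element g_n = (t^n a t^{-n})(t^{-n} a t^{n}) has exactly two geodesic representatives: t^n a t^{-2n} a t^n and t^{-n} a t^{2n} a t^{-n}. -/
open scoped commutatorElement

/-- Relators for the lamplighter group `L_m = ℤ_m ≀ ℤ` in the wreath product
presentation `⟨a, t | a^m, [t^i a t^{-i}, t^j a t^{-j}]⟩`, where `a` is encoded
by `true` and `t` by `false`. -/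
def lampRels (m : ℕ) : Set (FreeGroup Bool) :=
  {FreeGroup.of true ^ m} ∪
  {r | ∃ i j : ℤ,
    r = ⁅FreeGroup.of false ^ i * FreeGroup.of true * FreeGroup.of false ^ (-i),
        FreeGroup.of false ^ j * FreeGroup.of true * FreeGroup.of false ^ (-j)⁆}

/-- The lamplighter group `L_m = ℤ_m ≀ ℤ`. -/
abbrev Lamp (m : ℕ) := PresentedGroup (lampRels m)

/-- The generator `a` of `L_m`. -/
noncomputable def la (m : ℕ) : Lamp m := PresentedGroup.of true

/-- The generator `t` of `L_m`. -/
noncomputable def lt (m : ℕ) : Lamp m := PresentedGroup.of false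

/-- Word length of `g` with respect to the generating set `S` (and inverses):
the least length of a list of elements of `S ∪ S⁻¹` with product `g`. -/
noncomputable def wordLength {G : Type*} [Group G] (S : Set G) (g : G) : ℕ :=
  sInf {n | ∃ l : List G, (∀ x ∈ l, x ∈ S ∨ x⁻¹ ∈ S) ∧ l.length = n ∧ l.prod = g}


/-!
Map `L₂` to the wreath product `ℤ/2 ≀ ℤ`, whose elements are a lamp configuration and a cursor
position. Reading a word in `a, t^{±1}` moves the cursor by `±1` at each `t^{±1}` and toggles the
lamp under the cursor at each `a`. As `gₙ` lights exactly the lamps at `n` and `-n` and leaves the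
cursor at `0`, a word for `gₙ` reads an `a` at `n` and one at `-n`, in some order, and returns to
`0`: this takes at least `n + 2n + n` moves besides the two `a`'s, and with equality each of the
three stretches is a straight run of `t` or of `t⁻¹`.
-/

theorem RegularWreathProduct.commute_of_right_eq_one {D Q : Type*} [CommGroup D] [Group Q]
    {x y : D ≀ᵣ Q} (hx : x.right = 1) (hy : y.right = 1) : Commute x y := by
  ext <;> simp [hx, hy, mul_comm]

theorem List.forall_eq_one_of_length_le_sum_map {α : Type*} {l : List α} {f : α → ℤ}
    (hf : ∀ x ∈ l, f x ≤ 1) (h : l.length ≤ (l.map f).sum) : ∀ x ∈ l, f x = 1 := by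
  by_contra! ⟨x, hx, hne⟩
  have := List.sum_lt_sum f (fun _ => 1) hf ⟨x, hx, (hf x hx).lt_of_ne hne⟩
  simp at this
  omega

def IsGeodesicWord {G : Type*} [Group G] (S : Set G) (g : G) (l : List G) : Prop :=
  (∀ x ∈ l, x ∈ S ∨ x⁻¹ ∈ S) ∧ l.prod = g ∧ l.length = wordLength S g

namespace Lamp

open Multiplicative RegularWreathProduct

/-- `left` is the lamp configuration and `right` the position of the lamplighter. -/
abbrev Wreath : Type := Multiplicative (ZMod 2) ≀ᵣ Multiplicative ℤ

def wreathA : Wreath := ⟨Pi.mulSingle 1 (ofAdd 1), 1⟩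

def wreathT : Wreath := inl (ofAdd 1)

theorem wreathA_mul_self : wreathA * wreathA = 1 := by
  have hsq : ∀ z : Multiplicative (ZMod 2), z * z = 1 := by decide
  ext k
  · simp [wreathA, hsq]
  · simp [wreathA]

theorem lift_lampRels_eq_one :
    ∀ r ∈ lampRels 2, FreeGroup.lift (fun b => cond b wreathA wreathT) r = 1 := by
  rintro r (hr | ⟨i, j, rfl⟩)
  · rw [Set.mem_singleton_iff.mp hr, map_pow, FreeGroup.lift_apply_of, cond_true, pow_two,
      wreathA_mul_self]
  · rw [map_commutatorElement, commutatorElement_eq_one_iff_mul_comm]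
    refine RegularWreathProduct.commute_of_right_eq_one ?_ ?_ <;>
      simp [zpow_neg, wreathA]

noncomputable def toWreath : Lamp 2 →* Wreath := PresentedGroup.toGroup lift_lampRels_eq_one

@[simp] theorem toWreath_la : toWreath (la 2) = wreathA := PresentedGroup.toGroup.of _
@[simp] theorem toWreath_lt : toWreath (lt 2) = wreathT := PresentedGroup.toGroup.of _

noncomputable def cursor (g : Lamp 2) : ℤ := toAdd (toWreath g).right

noncomputable def lamp (g : Lamp 2) (k : ℤ) : ZMod 2 := toAdd ((toWreath g).left (ofAdd k))

theorem cursor_mul (g h : Lamp 2) : cursor (g * h) = cursor g + cursor h := by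
  simp [cursor]

theorem lamp_mul (g h : Lamp 2) (k : ℤ) :
    lamp (g * h) k = lamp g k + lamp h (k - cursor g) := by
  simp [lamp, cursor, ofAdd_sub, inv_mul_eq_div]

@[simp] theorem cursor_one : cursor 1 = 0 := rfl

@[simp] theorem cursor_la : cursor (la 2) = 0 := by simp [cursor, wreathA]

@[simp] theorem lamp_la (k : ℤ) : lamp (la 2) k = if k = 0 then 1 else 0 := by
  simp [lamp, wreathA, Pi.mulSingle_apply, apply_ite toAdd]

@[simp] theorem cursor_lt_zpow (m : ℤ) : cursor (lt 2 ^ m) = m := by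
  rw [cursor, map_zpow, toWreath_lt, wreathT, ← map_zpow (inl : Multiplicative ℤ →* Wreath),
    ← ofAdd_zsmul]
  simp

@[simp] theorem lamp_lt_zpow (m k : ℤ) : lamp (lt 2 ^ m) k = 0 := by
  rw [lamp, map_zpow, toWreath_lt, wreathT, ← map_zpow (inl : Multiplicative ℤ →* Wreath),
    left_inl]
  rfl

@[simp] theorem cursor_inv (g : Lamp 2) : cursor g⁻¹ = -cursor g := by
  simp [cursor]

@[simp] theorem lamp_one (k : ℤ) : lamp 1 k = 0 := by simp [lamp]

@[simp] theorem cursor_lt : cursor (lt 2) = 1 := by simpa using cursor_lt_zpow 1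

@[simp] theorem lamp_lt (k : ℤ) : lamp (lt 2) k = 0 := by simpa using lamp_lt_zpow 1 k

@[simp] theorem lamp_lt_inv (k : ℤ) : lamp (lt 2)⁻¹ k = 0 := by simpa using lamp_lt_zpow (-1) k

theorem la_inv : (la 2)⁻¹ = la 2 := by
  have h := PresentedGroup.one_of_mem (rels := lampRels 2) (Or.inl rfl)
  rw [map_pow, pow_two] at h
  exact inv_eq_of_mul_eq_one_right h

theorem commute_conj_la (i j : ℤ) :
    Commute (lt 2 ^ i * la 2 * lt 2 ^ (-i)) (lt 2 ^ j * la 2 * lt 2 ^ (-j)) := by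
  have h := PresentedGroup.one_of_mem (rels := lampRels 2) (Or.inr ⟨i, j, rfl⟩)
  rwa [map_commutatorElement, commutatorElement_eq_one_iff_commute] at h

/-- Since `a⁻¹ = a`, the letters of a word over `{a, t}^{±1}` are `a`, `t` and `t⁻¹`. -/
def IsLetter (x : Lamp 2) : Prop := x = la 2 ∨ x = lt 2 ∨ x = (lt 2)⁻¹

theorem isLetter_iff {x : Lamp 2} :
    IsLetter x ↔ x ∈ ({la 2, lt 2} : Set (Lamp 2)) ∨ x⁻¹ ∈ ({la 2, lt 2} : Set (Lamp 2)) := by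
  constructor
  · rintro (rfl | rfl | rfl)
    · exact Or.inl (Or.inl rfl)
    · exact Or.inl (Or.inr rfl)
    · exact Or.inr (Or.inr (inv_inv _))
  · rintro ((rfl | rfl) | (h | h))
    · exact Or.inl rfl
    · exact Or.inr (Or.inl rfl)
    · exact Or.inl (by rw [← inv_inv x, h, la_inv])
    · exact Or.inr (Or.inr (by rw [← h, inv_inv]))

namespace IsLetter

theorem abs_cursor_le_one {x : Lamp 2} (hx : IsLetter x) : |cursor x| ≤ 1 := by
  rcases hx with rfl | rfl | rfl <;> simp

theorem eq_of_cursor_eq {x s : Lamp 2} (hx : IsLetter x) (hs : s = lt 2 ∨ s = (lt 2)⁻¹)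
    (h : cursor x = cursor s) : x = s := by
  rcases hx with rfl | rfl | rfl <;> rcases hs with rfl | rfl <;> simp_all

theorem eq_la_of_lamp_ne_zero {x : Lamp 2} {k : ℤ} (hx : IsLetter x) (h : lamp x k ≠ 0) :
    x = la 2 ∧ k = 0 := by
  rcases hx with rfl | rfl | rfl <;> simp_all

end IsLetter

theorem cursor_list_prod (l : List (Lamp 2)) : cursor l.prod = (l.map cursor).sum := by
  induction l with
  | nil => simp
  | cons x l ih => simp [cursor_mul, ih]

theorem abs_cursor_list_prod_le {l : List (Lamp 2)} (hl : ∀ x ∈ l, IsLetter x) :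
    |cursor l.prod| ≤ l.length := by
  induction l with
  | nil => simp
  | cons x l ih =>
    have hx := (hl x List.mem_cons_self).abs_cursor_le_one
    have hrest := ih fun y hy => hl y (List.mem_cons_of_mem x hy)
    rw [List.prod_cons, cursor_mul, List.length_cons, Nat.cast_succ]
    linarith [abs_add_le (cursor x) (cursor l.prod)]

theorem le_length_of_cursor_eq {l : List (Lamp 2)} (hl : ∀ x ∈ l, IsLetter x) {s : Lamp 2}
    (hs : s = lt 2 ∨ s = (lt 2)⁻¹) {m : ℕ} (hcur : cursor l.prod = m * cursor s) :
    m ≤ l.length := by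
  have := abs_cursor_list_prod_le hl
  rcases hs with rfl | rfl <;> simp only [hcur, cursor_lt, cursor_inv] at this <;>
    simp at this <;> omega

theorem eq_replicate_of_cursor_eq {l : List (Lamp 2)} (hl : ∀ x ∈ l, IsLetter x) {s : Lamp 2}
    (hs : s = lt 2 ∨ s = (lt 2)⁻¹) {m : ℕ} (hcur : cursor l.prod = m * cursor s)
    (hlen : l.length ≤ m) : l = List.replicate m s := by
  have hsq : cursor s * cursor s = 1 := by rcases hs with rfl | rfl <;> simp
  have habs : |cursor s| = 1 := by rcases hs with rfl | rfl <;> simp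
  have hlen' : l.length = m := le_antisymm hlen (le_length_of_cursor_eq hl hs hcur)
  have hsum : l.length ≤ (l.map fun x => cursor x * cursor s).sum := by
    rw [List.sum_map_mul_right, ← cursor_list_prod, hcur, mul_assoc, hsq, hlen']
    simp
  have hbound : ∀ x ∈ l, cursor x * cursor s ≤ 1 := fun x hx =>
    calc cursor x * cursor s ≤ |cursor x * cursor s| := le_abs_self _
      _ = |cursor x| := by rw [abs_mul, habs, mul_one]
      _ ≤ 1 := (hl x hx).abs_cursor_le_one
  refine List.eq_replicate_iff.mpr ⟨hlen', fun x hx => (hl x hx).eq_of_cursor_eq hs ?_⟩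
  have := List.forall_eq_one_of_length_le_sum_map hbound hsum x hx
  calc cursor x = cursor x * cursor s * cursor s := by rw [mul_assoc, hsq, mul_one]
    _ = cursor s := by rw [this, one_mul]

theorem exists_eq_append_la_of_lamp_ne_zero {l : List (Lamp 2)} (hl : ∀ x ∈ l, IsLetter x)
    {k : ℤ} (h : lamp l.prod k ≠ 0) : ∃ u v, l = u ++ la 2 :: v ∧ cursor u.prod = k := by
  induction l generalizing k with
  | nil => simp at h
  | cons x l ih =>
    rw [List.prod_cons, lamp_mul] at h
    by_cases hx : lamp x k = 0
    · rw [hx, zero_add] at h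
      obtain ⟨u, v, rfl, hu⟩ := ih (fun y hy => hl y (List.mem_cons_of_mem x hy)) h
      exact ⟨x :: u, v, rfl, by rw [List.prod_cons, cursor_mul, hu]; ring⟩
    · obtain ⟨rfl, rfl⟩ := (hl x List.mem_cons_self).eq_la_of_lamp_ne_zero hx
      exact ⟨[], l, rfl, by simp⟩

theorem exists_split_of_lamp_ne_zero {l : List (Lamp 2)} (hl : ∀ x ∈ l, IsLetter x) {p q : ℤ}
    (hp : lamp l.prod p ≠ 0) (hq : lamp l.prod q ≠ 0) (hpq : p ≠ q) :
    ∃ d₁ d₂ d₃, l = d₁ ++ la 2 :: (d₂ ++ la 2 :: d₃) ∧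
      (cursor d₁.prod = p ∧ cursor d₂.prod = q - p ∨
        cursor d₁.prod = q ∧ cursor d₂.prod = p - q) := by
  obtain ⟨u, v, rfl, hu⟩ := exists_eq_append_la_of_lamp_ne_zero hl hp
  have hsplit : lamp (u ++ la 2 :: v).prod q = lamp u.prod q + lamp v.prod (q - p) := by
    simp [lamp_mul, hu, sub_eq_zero, hpq.symm]
  rw [hsplit] at hq
  by_cases hq' : lamp u.prod q = 0
  · rw [hq', zero_add] at hq
    obtain ⟨d₂, d₃, rfl, hd₂⟩ := exists_eq_append_la_of_lamp_ne_zero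
      (fun y hy => hl y (by simp [hy])) hq
    exact ⟨u, d₂, d₃, rfl, Or.inl ⟨hu, hd₂⟩⟩
  · obtain ⟨d₁, d₂, rfl, hd₁⟩ := exists_eq_append_la_of_lamp_ne_zero
      (fun y hy => hl y (by simp [hy])) hq'
    refine ⟨d₁, d₂, v, by simp, Or.inr ⟨hd₁, ?_⟩⟩
    simp only [List.prod_append, List.prod_cons, cursor_mul, cursor_la] at hu
    omega

noncomputable def gn (n : ℕ) : Lamp 2 :=
  lt 2 ^ n * la 2 * (lt 2 ^ n)⁻¹ * ((lt 2 ^ n)⁻¹ * la 2 * lt 2 ^ n)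

theorem cursor_gn (n : ℕ) : cursor (gn n) = 0 := by
  simp [gn, cursor_mul, ← zpow_natCast]

theorem lamp_gn (n : ℕ) (k : ℤ) :
    lamp (gn n) k = (if k = n then 1 else 0) + (if k = -n then 1 else 0) := by
  simp [gn, lamp_mul, cursor_mul, ← zpow_natCast, ← zpow_neg, sub_eq_zero,
    add_eq_zero_iff_eq_neg]

noncomputable def geodesic (s : Lamp 2) (n : ℕ) : List (Lamp 2) :=
  List.replicate n s ++ [la 2] ++ List.replicate (2 * n) s⁻¹ ++ [la 2] ++ List.replicate n s

theorem length_geodesic (s : Lamp 2) (n : ℕ) : (geodesic s n).length = 4 * n + 2 := by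
  simp [geodesic]
  omega

theorem isLetter_of_mem_geodesic {s : Lamp 2} (hs : s = lt 2 ∨ s = (lt 2)⁻¹) (n : ℕ) :
    ∀ x ∈ geodesic s n, IsLetter x := by
  have hs' : IsLetter s⁻¹ := by rcases hs with rfl | rfl <;> simp [IsLetter]
  simp only [geodesic, List.mem_append, List.mem_replicate, List.mem_singleton]
  rintro x ((((⟨-, rfl⟩ | rfl) | ⟨-, rfl⟩) | rfl) | ⟨-, rfl⟩)
  all_goals first | exact Or.inl rfl | exact hs' | exact Or.inr hs

theorem prod_geodesic {s : Lamp 2} (hs : s = lt 2 ∨ s = (lt 2)⁻¹) (n : ℕ) :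
    (geodesic s n).prod = gn n := by
  rcases hs with rfl | rfl
  · simp only [geodesic, gn, List.prod_append, List.prod_replicate, List.prod_singleton]
    group
  · simp only [geodesic, gn, List.prod_append, List.prod_replicate, List.prod_singleton]
    calc (lt 2)⁻¹ ^ n * la 2 * (lt 2)⁻¹⁻¹ ^ (2 * n) * la 2 * (lt 2)⁻¹ ^ n
        = lt 2 ^ (-n : ℤ) * la 2 * lt 2 ^ (-(-n) : ℤ) *
            (lt 2 ^ (n : ℤ) * la 2 * lt 2 ^ (-n : ℤ)) := by group
      _ = lt 2 ^ (n : ℤ) * la 2 * lt 2 ^ (-n : ℤ) *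
            (lt 2 ^ (-n : ℤ) * la 2 * lt 2 ^ (-(-n) : ℤ)) := (commute_conj_la _ _).eq.symm
      _ = _ := by group

theorem le_length_and_eq_geodesic_of_split {s : Lamp 2} (hs : s = lt 2 ∨ s = (lt 2)⁻¹) {n : ℕ}
    {l d₁ d₂ d₃ : List (Lamp 2)} (hl : ∀ x ∈ l, IsLetter x)
    (hsplit : l = d₁ ++ la 2 :: (d₂ ++ la 2 :: d₃)) (h₁ : cursor d₁.prod = n * cursor s)
    (h₂ : cursor d₂.prod = (2 * n : ℕ) * cursor s⁻¹) (h₃ : cursor d₃.prod = n * cursor s) :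
    4 * n + 2 ≤ l.length ∧ (l.length ≤ 4 * n + 2 → l = geodesic s n) := by
  subst hsplit
  have hs' : s⁻¹ = lt 2 ∨ s⁻¹ = (lt 2)⁻¹ := by rcases hs with rfl | rfl <;> simp
  have hl₁ : ∀ x ∈ d₁, IsLetter x := fun x hx => hl x (by simp [hx])
  have hl₂ : ∀ x ∈ d₂, IsLetter x := fun x hx => hl x (by simp [hx])
  have hl₃ : ∀ x ∈ d₃, IsLetter x := fun x hx => hl x (by simp [hx])
  have b₁ := le_length_of_cursor_eq hl₁ hs h₁
  have b₂ := le_length_of_cursor_eq hl₂ hs' h₂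
  have b₃ := le_length_of_cursor_eq hl₃ hs h₃
  have hlen : (d₁ ++ la 2 :: (d₂ ++ la 2 :: d₃)).length =
      d₁.length + d₂.length + d₃.length + 2 := by
    simp
    omega
  refine ⟨by omega, fun h => ?_⟩
  rw [eq_replicate_of_cursor_eq hl₁ hs h₁ (by omega),
    eq_replicate_of_cursor_eq hl₂ hs' h₂ (by omega), eq_replicate_of_cursor_eq hl₃ hs h₃ (by omega)]
  simp [geodesic]

theorem le_length_and_eq_geodesic_of_prod_eq_gn {n : ℕ} (hn : 1 ≤ n) {l : List (Lamp 2)}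
    (hl : ∀ x ∈ l, IsLetter x) (hprod : l.prod = gn n) :
    4 * n + 2 ≤ l.length ∧
      (l.length ≤ 4 * n + 2 → l = geodesic (lt 2) n ∨ l = geodesic (lt 2)⁻¹ n) := by
  have hlit : ∀ k : ℤ, k = n ∨ k = -n → lamp l.prod k ≠ 0 := by
    rintro k (rfl | rfl) <;> simp [hprod, lamp_gn, Nat.one_le_iff_ne_zero.mp hn]
  obtain ⟨d₁, d₂, d₃, hsplit, hcur⟩ :=
    exists_split_of_lamp_ne_zero hl (hlit n (Or.inl rfl)) (hlit (-n) (Or.inr rfl)) (by omega)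
  have htotal : cursor d₁.prod + cursor d₂.prod + cursor d₃.prod = 0 := by
    have := cursor_gn n
    rw [← hprod, hsplit] at this
    simpa [cursor_mul, add_assoc] using this
  rcases hcur with ⟨h₁, h₂⟩ | ⟨h₁, h₂⟩
  · obtain ⟨hle, heq⟩ := le_length_and_eq_geodesic_of_split (n := n) (Or.inl rfl) hl hsplit
      (by simp [h₁]) (by simp [h₂]; ring) (by simp; omega)
    exact ⟨hle, fun h => Or.inl (heq h)⟩
  · obtain ⟨hle, heq⟩ := le_length_and_eq_geodesic_of_split (n := n) (Or.inr rfl) hl hsplit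
      (by simp [h₁]) (by simp [h₂]; ring) (by simp; omega)
    exact ⟨hle, fun h => Or.inr (heq h)⟩

theorem geodesic_lt_ne_geodesic_lt_inv {n : ℕ} (hn : 1 ≤ n) :
    geodesic (lt 2) n ≠ geodesic (lt 2)⁻¹ n := by
  intro h
  have := congrArg (fun w => cursor (w.take n).prod) h
  simp [geodesic, ← zpow_natCast] at this
  omega

theorem wordLength_gn {n : ℕ} (hn : 1 ≤ n) :
    wordLength ({la 2, lt 2} : Set (Lamp 2)) (gn n) = 4 * n + 2 := by
  have hmem : ∀ x ∈ geodesic (lt 2) n, x ∈ ({la 2, lt 2} : Set (Lamp 2)) ∨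
      x⁻¹ ∈ ({la 2, lt 2} : Set (Lamp 2)) := fun x hx =>
    isLetter_iff.mp (isLetter_of_mem_geodesic (Or.inl rfl) n x hx)
  have hprod := prod_geodesic (Or.inl rfl) n
  refine le_antisymm (Nat.sInf_le ⟨_, hmem, length_geodesic _ n, hprod⟩) ?_
  refine le_csInf ⟨_, _, hmem, length_geodesic _ n, hprod⟩ ?_
  rintro m ⟨l, hl, rfl, hprod⟩
  exact (le_length_and_eq_geodesic_of_prod_eq_gn hn (fun x hx => isLetter_iff.mpr (hl x hx))
    hprod).1

theorem isGeodesicWord_geodesic {s : Lamp 2} (hs : s = lt 2 ∨ s = (lt 2)⁻¹) {n : ℕ}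
    (hn : 1 ≤ n) :
    IsGeodesicWord {la 2, lt 2} (gn n) (geodesic s n) :=
  ⟨fun x hx => isLetter_iff.mp (isLetter_of_mem_geodesic hs n x hx), prod_geodesic hs n,
    by rw [length_geodesic, wordLength_gn hn]⟩

theorem isGeodesicWord_gn_iff {n : ℕ} (hn : 1 ≤ n) (l : List (Lamp 2)) :
    IsGeodesicWord {la 2, lt 2} (gn n) l ↔ l = geodesic (lt 2) n ∨ l = geodesic (lt 2)⁻¹ n := by
  constructor
  · rintro ⟨hl, hprod, hlen⟩
    refine (le_length_and_eq_geodesic_of_prod_eq_gn hn (fun x hx => isLetter_iff.mpr (hl x hx))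
      hprod).2 ?_
    rw [hlen, wordLength_gn hn]
  · rintro (rfl | rfl)
    exacts [isGeodesicWord_geodesic (Or.inl rfl) hn, isGeodesicWord_geodesic (Or.inr rfl) hn]

end Lamp

/-- In `L₂` with generating set `{a, t}`, for `n ≥ 1` the element
`gₙ = (tⁿ a t⁻ⁿ)(t⁻ⁿ a tⁿ)` has exactly two geodesic representatives:
`tⁿ a t⁻²ⁿ a tⁿ` and `t⁻ⁿ a t²ⁿ a t⁻ⁿ`. -/
theorem lamplighter_gn_two_geodesics (n : ℕ) (hn : 1 ≤ n) :
    letI S : Set (Lamp 2) := {la 2, lt 2}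
    letI a := la 2
    letI t := lt 2
    letI g := t ^ n * a * (t ^ n)⁻¹ * ((t ^ n)⁻¹ * a * t ^ n)
    letI w1 := List.replicate n t ++ [a] ++ List.replicate (2 * n) t⁻¹ ++ [a] ++
      List.replicate n t
    letI w2 := List.replicate n t⁻¹ ++ [a] ++ List.replicate (2 * n) t ++ [a] ++
      List.replicate n t⁻¹
    w1 ≠ w2 ∧
    ∀ l : List (Lamp 2),
      ((∀ x ∈ l, x ∈ S ∨ x⁻¹ ∈ S) ∧ l.prod = g ∧ l.length = wordLength S g) ↔
        (l = w1 ∨ l = w2) := by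
  have hw₂ : Lamp.geodesic (lt 2)⁻¹ n = List.replicate n (lt 2)⁻¹ ++ [la 2] ++
      List.replicate (2 * n) (lt 2) ++ [la 2] ++ List.replicate n (lt 2)⁻¹ := by
    simp [Lamp.geodesic]
  rw [← hw₂]
  exact ⟨Lamp.geodesic_lt_ne_geodesic_lt_inv hn, Lamp.isGeodesicWord_gn_iff hn⟩
end

section
/- Let w ∈ L₂ = ℤ₂ ≀ ℤ have right-first normal form a_{i₁} a_{i₂} ⋯ a_{i_m} a_{−j₁} ⋯ a_{−j_l} t^r with 0 ≤ i₁ < i₂ < ⋯ < i_m and 0 < j₁ < ⋯ < j_l, where a_k = t^k a t^{−k}. Then the word length of w with respect to {a, t} equals m + l + min(2 j_l + i_m + |r − i_m|, 2 i_m + j_l + |r + j_l|). -/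
/-!
Map `L₂` to its standard model `(ℤ →₀ ℤ/2) ⋊ ℤ`: a finite set of lit lamps and a cursor.
Reading a word letter by letter, the cursor starts at `0`, every `a` switches the lamp under the
cursor and every `t^{±1}` moves the cursor by one. So a word for `w` contains at least `m + l`
letters `a`, one per lit lamp, and its `t`-letters trace a path from `0` through `i_m` and `-j_l`,
in some order, to `r`; such a path has length at least the minimum in the formula. Conversely the
routes `0 → -j_l → i_m → r` and `0 → i_m → -j_l → r`, switching the lamps on the way, realise the
two expressions.
-/

open scoped commutatorElement

/-- The conjugate `a_k = t^k a t^{-k}` in `L₂`. -/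
noncomputable def lampA (k : ℤ) : Lamp 2 := lt 2 ^ k * la 2 * lt 2 ^ (-k)

lemma List.Pairwise.le_getLastD {α : Type*} [Preorder α] {d : α} {L : List α}
    (h : (d :: L).Pairwise (· ≤ ·)) : ∀ x ∈ d :: L, x ≤ L.getLastD d := by
  induction L generalizing d with
  | nil => simp
  | cons p L ih =>
    obtain ⟨hd, hpL⟩ := List.pairwise_cons.1 h
    have hp := ih hpL
    rw [List.getLastD_cons]
    rintro x (_ | ⟨_, hx⟩)
    exacts [(hd p List.mem_cons_self).trans (hp p List.mem_cons_self), hp x hx]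

section Words

variable {G : Type*} [Group G]

def IsWordIn (S : Set G) (l : List G) : Prop := ∀ x ∈ l, x ∈ S ∨ x⁻¹ ∈ S

lemma IsWordIn.append {S : Set G} {l l' : List G} (h : IsWordIn S l) (h' : IsWordIn S l') :
    IsWordIn S (l ++ l') := by
  intro x hx
  rcases List.mem_append.1 hx with hx | hx
  exacts [h x hx, h' x hx]

lemma IsWordIn.map {H : Type*} [Group H] (f : G →* H) {S : Set G} {l : List G}
    (h : IsWordIn S l) : IsWordIn (f '' S) (l.map f) := by
  intro y hy
  obtain ⟨x, hx, rfl⟩ := List.mem_map.1 hy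
  rcases h x hx with hS | hS
  exacts [.inl ⟨x, hS, rfl⟩, .inr ⟨x⁻¹, hS, map_inv f x⟩]

lemma wordLength_le_length {S : Set G} {l : List G} (h : IsWordIn S l) :
    wordLength S l.prod ≤ l.length :=
  Nat.sInf_le ⟨l, h, rfl, rfl⟩

def zpowWord (t : G) (k : ℤ) : List G := List.replicate k.natAbs (if 0 ≤ k then t else t⁻¹)

lemma prod_zpowWord (t : G) (k : ℤ) : (zpowWord t k).prod = t ^ k := by
  rcases le_or_gt 0 k with hk | hk
  · rw [zpowWord, if_pos hk, List.prod_replicate, ← zpow_natCast, Int.natAbs_of_nonneg hk]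
  · rw [zpowWord, if_neg hk.not_ge, List.prod_replicate, inv_pow, ← zpow_natCast, ← zpow_neg,
      Int.ofNat_natAbs_of_nonpos hk.le, neg_neg]

lemma length_zpowWord (t : G) (k : ℤ) : ((zpowWord t k).length : ℤ) = |k| := by
  simp [zpowWord]

lemma isWordIn_zpowWord {S : Set G} {t : G} (ht : t ∈ S ∨ t⁻¹ ∈ S) (k : ℤ) :
    IsWordIn S (zpowWord t k) := by
  intro x hx
  obtain rfl := List.eq_of_mem_replicate hx
  split_ifs
  · exact ht
  · rwa [inv_inv, or_comm]

/-- The lamplighter's route from `s` through the positions `P`, switching the lamp `a` at each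
of them, to `e`. -/
def walk (a t : G) : ℤ → List ℤ → ℤ → List G
  | s, [], e => zpowWord t (e - s)
  | s, p :: P, e => zpowWord t (p - s) ++ a :: walk a t p P e

lemma prod_walk (a t : G) (s : ℤ) (P : List ℤ) (e : ℤ) :
    (walk a t s P e).prod = t ^ (-s) * (P.map fun p => t ^ p * a * t ^ (-p)).prod * t ^ e := by
  induction P generalizing s with
  | nil =>
    rw [walk, prod_zpowWord, List.map_nil, List.prod_nil, mul_one, ← zpow_add, sub_eq_neg_add]
  | cons p P ih =>
    rw [walk, List.prod_append, List.prod_cons, ih, prod_zpowWord, List.map_cons, List.prod_cons,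
      sub_eq_add_neg, zpow_add]
    group

lemma length_walk (a t : G) {s e : ℤ} {P : List ℤ} (hP : P.Pairwise (· ≤ ·))
    (hs : ∀ p ∈ P, s ≤ p) (he : ∀ p ∈ P, p ≤ e) (hse : s ≤ e) :
    ((walk a t s P e).length : ℤ) = P.length + (e - s) := by
  induction P generalizing s with
  | nil => simp [walk, length_zpowWord, abs_of_nonneg (sub_nonneg.2 hse)]
  | cons p P ih =>
    obtain ⟨hpP, hP⟩ := List.pairwise_cons.1 hP
    have hsp := hs p List.mem_cons_self
    have hpe := he p List.mem_cons_self
    have := ih hP hpP (fun q hq => he q (List.mem_cons_of_mem p hq)) hpe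
    simp only [walk, List.length_append, List.length_cons, Nat.cast_add, Nat.cast_one,
      length_zpowWord, this, abs_of_nonneg (sub_nonneg.2 hsp)]
    ring

lemma isWordIn_walk {S : Set G} {a t : G} (ha : a ∈ S ∨ a⁻¹ ∈ S) (ht : t ∈ S ∨ t⁻¹ ∈ S)
    (s : ℤ) (P : List ℤ) (e : ℤ) : IsWordIn S (walk a t s P e) := by
  induction P generalizing s with
  | nil => exact isWordIn_zpowWord ht _
  | cons p P ih =>
    refine (isWordIn_zpowWord ht _).append ?_
    rintro x (_ | ⟨_, hx⟩)
    exacts [ha, ih p x hx]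

lemma exists_isWordIn_prod_eq {S : Set G} {g : G} (hg : g ∈ Subgroup.closure S) :
    ∃ l, IsWordIn S l ∧ l.prod = g := by
  rw [← Subgroup.mem_toSubmonoid, Subgroup.closure_toSubmonoid] at hg
  exact Submonoid.exists_list_of_mem_closure hg

lemma exists_isWordIn_length_eq_wordLength {S : Set G} (hS : Subgroup.closure S = ⊤) (g : G) :
    ∃ l, IsWordIn S l ∧ l.prod = g ∧ l.length = wordLength S g := by
  obtain ⟨l, hl, hlg⟩ := exists_isWordIn_prod_eq (hS ▸ Subgroup.mem_top g)
  obtain ⟨l', hl', hlen, hl'g⟩ := Nat.sInf_mem (s := {n | ∃ l : List G, IsWordIn S l ∧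
    l.length = n ∧ l.prod = g}) ⟨l.length, l, hl, rfl, hlg⟩
  exact ⟨l', hl', hl'g, hlen⟩

lemma length_walk_getLastD (a t : G) {L : List ℤ}
    (hL : L.Pairwise (· ≤ ·)) (hL0 : ∀ p ∈ L, 0 ≤ p) {s : ℤ} (hs : s ≤ 0) :
    ((walk a t s L (L.getLastD 0)).length : ℤ) = L.length + (L.getLastD 0 - s) := by
  have hlast := (List.pairwise_cons.2 ⟨hL0, hL⟩).le_getLastD
  exact length_walk a t hL (fun p hp => hs.trans (hL0 p hp))
    (fun p hp => hlast p (List.mem_cons_of_mem 0 hp)) (hs.trans (hlast 0 List.mem_cons_self))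

end Words

lemma Finsupp.support_sum_map_single {α M : Type*} [DecidableEq α] [AddCommMonoid M]
    {L : List α} (hL : L.Nodup) {b : M} (hb : b ≠ 0) :
    ((L.map fun k => Finsupp.single k b).sum).support = L.toFinset := by
  induction L with
  | nil => simp
  | cons p L ih =>
    obtain ⟨hpL, hL⟩ := List.nodup_cons.1 hL
    have hdisj : Disjoint (Finsupp.single p b).support
        (L.map fun k => Finsupp.single k b).sum.support := by
      rwa [ih hL, Finsupp.support_single p hb, Finset.disjoint_singleton_left, List.mem_toFinset]
    rw [List.map_cons, List.sum_cons, Finsupp.support_add_eq hdisj, ih hL,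
      Finsupp.support_single p hb, List.toFinset_cons, Finset.insert_eq]

lemma nodup_append_map_neg {I J : List ℤ} (hI : I.Nodup) (hJ : J.Nodup)
    (hI0 : ∀ p ∈ I, 0 ≤ p) (hJ0 : ∀ q ∈ J, 0 < q) : (I ++ J.map Neg.neg).Nodup := by
  refine List.nodup_append.2 ⟨hI, hJ.map neg_injective, ?_⟩
  rintro p hp _ hq' rfl
  obtain ⟨q, hq, rfl⟩ := List.mem_map.1 hq'
  linarith [hI0 _ hp, hJ0 q hq]

abbrev LampConfig := ℤ →₀ ZMod 2

noncomputable def lampShift : Multiplicative ℤ →* MulAut (Multiplicative LampConfig) where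
  toFun k := AddEquiv.toMultiplicative (Finsupp.domCongr (Equiv.addRight k.toAdd))
  map_one' := by ext; simp [Equiv.Perm.one_def]
  map_mul' k k' := by
    ext v p
    simp [Equiv.Perm.mul_def, add_right_comm]

abbrev LampModel := Multiplicative LampConfig ⋊[lampShift] Multiplicative ℤ

namespace LampModel

def lamps (x : LampModel) : LampConfig := x.left.toAdd

def cursor (x : LampModel) : ℤ := x.right.toAdd

noncomputable def a : LampModel := .inl (.ofAdd (Finsupp.single 0 1))

noncomputable def t : LampModel := .inr (.ofAdd 1)

lemma lamps_mul (x y : LampModel) (p : ℤ) :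
    lamps (x * y) p = lamps x p + lamps y (p - cursor x) := by
  simp [lamps, cursor, lampShift, sub_eq_add_neg]

lemma cursor_mul (x y : LampModel) : cursor (x * y) = cursor x + cursor y := rfl

@[simp] lemma cursor_one : cursor 1 = 0 := rfl
@[simp] lemma lamps_a : lamps a = Finsupp.single 0 1 := rfl
@[simp] lemma cursor_a : cursor a = 0 := rfl
@[simp] lemma lamps_t : lamps t = 0 := rfl
@[simp] lemma cursor_t : cursor t = 1 := rfl
@[simp] lemma lamps_t_inv : lamps t⁻¹ = 0 := by simp [t, lamps]
@[simp] lemma cursor_t_inv : cursor t⁻¹ = -1 := rfl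

lemma a_mul_a : a * a = 1 := by
  rw [a, ← map_mul, ← ofAdd_add, ← Finsupp.single_add, show (1 + 1 : ZMod 2) = 0 from rfl,
    Finsupp.single_zero, ofAdd_zero, map_one]

lemma t_zpow (k : ℤ) : t ^ k = .inr (.ofAdd k) := by
  rw [t, ← map_zpow, ← ofAdd_zsmul, smul_eq_mul, mul_one]

lemma lampAt_eq (k : ℤ) : t ^ k * a * t ^ (-k) = .inl (.ofAdd (Finsupp.single k 1)) := by
  rw [t_zpow, t_zpow, ofAdd_neg, a, ← SemidirectProduct.inl_aut]
  congr 1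
  ext p
  simp [lampShift, Finsupp.single_apply]

lemma eq_of_mem_letters {x : LampModel}
    (hx : x ∈ ({a, t} : Set LampModel) ∨ x⁻¹ ∈ ({a, t} : Set LampModel)) :
    x = a ∨ x = t ∨ x = t⁻¹ := by
  rcases hx with (rfl | rfl) | (hx | hx)
  · exact .inl rfl
  · exact .inr (.inl rfl)
  · exact .inl (by rw [← inv_inv x, hx, inv_eq_of_mul_eq_one_left a_mul_a])
  · exact .inr (.inr (by rw [← hx, inv_inv]))

lemma card_support_lamps_mul_le (x y : LampModel) :
    (lamps (x * y)).support.card ≤ (lamps x).support.card + (lamps y).support.card := by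
  classical
  calc (lamps (x * y)).support.card
      ≤ ((lamps x).support ∪
          (lamps y).support.map (Equiv.addRight (cursor x)).toEmbedding).card := by
        refine Finset.card_le_card fun p hp => ?_
        rw [Finsupp.mem_support_iff, lamps_mul] at hp
        by_cases hx : lamps x p = 0
        · refine Finset.mem_union_right _ (Finset.mem_map.2 ⟨p - cursor x, ?_, by simp⟩)
          rw [hx, zero_add] at hp
          exact Finsupp.mem_support_iff.2 hp
        · exact Finset.mem_union_left _ (Finsupp.mem_support_iff.2 hx)
    _ ≤ (lamps x).support.card + (lamps y).support.card :=
        (Finset.card_union_le _ _).trans_eq (by rw [Finset.card_map])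

def travel (l : List LampModel) : ℤ := (l.map fun x => |cursor x|).sum

lemma travel_append (l l' : List LampModel) : travel (l ++ l') = travel l + travel l' := by
  simp [travel]

lemma abs_cursor_prod_le_travel (l : List LampModel) : |cursor l.prod| ≤ travel l := by
  induction l with
  | nil => simp [travel, cursor]
  | cons x l ih =>
    rw [List.prod_cons, cursor_mul]
    exact (abs_add_le _ _).trans (by simp [travel] at ih ⊢; linarith)

lemma card_support_add_travel_le {l : List LampModel} (hl : IsWordIn {a, t} l) :
    ((lamps l.prod).support.card : ℤ) + travel l ≤ l.length := by
  induction l with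
  | nil => simp [travel, lamps]
  | cons x l ih =>
    have hxl := card_support_lamps_mul_le x l.prod
    have ih := ih fun y hy => hl y (List.mem_cons_of_mem x hy)
    rw [List.prod_cons]
    simp only [travel, List.map_cons, List.sum_cons, List.length_cons] at ih ⊢
    rcases eq_of_mem_letters (hl x List.mem_cons_self) with rfl | rfl | rfl <;>
      simp at hxl ⊢ <;> omega

lemma exists_prefix_cursor_eq {l : List LampModel} (hl : IsWordIn {a, t} l) {p : ℤ}
    (hp : lamps l.prod p ≠ 0) : ∃ u, u <+: l ∧ cursor u.prod = p := by
  induction l generalizing p with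
  | nil => simp [lamps] at hp
  | cons x l ih =>
    rw [List.prod_cons, lamps_mul] at hp
    by_cases hlp : lamps l.prod (p - cursor x) = 0
    · refine ⟨[], List.nil_prefix, ?_⟩
      rw [hlp, add_zero] at hp
      rcases eq_of_mem_letters (hl x List.mem_cons_self) with rfl | rfl | rfl
      · simpa [Finsupp.single_apply, eq_comm] using hp
      · simp at hp
      · simp at hp
    · obtain ⟨u, hu, hup⟩ := ih (fun y hy => hl y (List.mem_cons_of_mem x hy)) hlp
      refine ⟨x :: u, (List.prefix_cons_inj x).2 hu, ?_⟩
      rw [List.prod_cons, cursor_mul, hup, add_sub_cancel]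

lemma travel_ge_of_prefix {u v l : List LampModel} (huv : u <+: v) (hvl : v <+: l) :
    |cursor u.prod| + |cursor v.prod - cursor u.prod| + |cursor l.prod - cursor v.prod| ≤
      travel l := by
  obtain ⟨v, rfl⟩ := huv
  obtain ⟨l, rfl⟩ := hvl
  simp only [List.prod_append, cursor_mul, travel_append, add_sub_cancel_left]
  linarith [abs_cursor_prod_le_travel u, abs_cursor_prod_le_travel v, abs_cursor_prod_le_travel l]

/-- Every lit lamp costs a letter `a`, and the cursor has to pass through `p` and `-q`, in some
order, before reaching its final position. -/
theorem le_length_of_isWordIn {l : List LampModel} (hl : IsWordIn {a, t} l) {p q : ℤ}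
    (hp0 : 0 ≤ p) (hq0 : 0 ≤ q) (hp : p = 0 ∨ lamps l.prod p ≠ 0)
    (hq : q = 0 ∨ lamps l.prod (-q) ≠ 0) :
    (lamps l.prod).support.card +
      min (2 * q + p + |cursor l.prod - p|) (2 * p + q + |cursor l.prod + q|) ≤ l.length := by
  have visit {p : ℤ} (hp : p = 0 ∨ lamps l.prod p ≠ 0) : ∃ u, u <+: l ∧ cursor u.prod = p := by
    rcases hp with rfl | hp
    exacts [⟨[], List.nil_prefix, rfl⟩, exists_prefix_cursor_eq hl hp]
  obtain ⟨u, hu, rfl⟩ := visit hp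
  obtain ⟨v, hv, hvq⟩ := visit (p := -q) (by simpa using hq)
  have hcount := card_support_add_travel_le hl
  rcases List.prefix_or_prefix_of_prefix hu hv with huv | hvu
  · have htravel := travel_ge_of_prefix huv hv
    rw [hvq, abs_of_nonneg hp0, abs_of_nonpos (by linarith), sub_neg_eq_add] at htravel
    linarith [min_le_right (2 * q + cursor u.prod + |cursor l.prod - cursor u.prod|)
      (2 * cursor u.prod + q + |cursor l.prod + q|)]
  · have htravel := travel_ge_of_prefix hvu hu
    rw [hvq, abs_neg, abs_of_nonneg hq0, abs_of_nonneg (by linarith)] at htravel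
    linarith [min_le_left (2 * q + cursor u.prod + |cursor l.prod - cursor u.prod|)
      (2 * cursor u.prod + q + |cursor l.prod + q|)]

end LampModel

noncomputable def toModel : Lamp 2 →* LampModel :=
  PresentedGroup.toGroup (f := fun b => if b then LampModel.a else LampModel.t) <| by
    rintro r (rfl | ⟨p, q, rfl⟩)
    · simp [pow_two, LampModel.a_mul_a]
    · simp only [map_commutatorElement, map_mul, map_zpow, FreeGroup.lift_apply_of, if_true,
        Bool.false_eq_true, if_false, LampModel.lampAt_eq, commutatorElement_eq_one_iff_commute]
      exact (Commute.all _ _).map SemidirectProduct.inl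

lemma toModel_la : toModel (la 2) = LampModel.a := PresentedGroup.toGroup.of _

lemma toModel_lt : toModel (lt 2) = LampModel.t := PresentedGroup.toGroup.of _

lemma toModel_lampA (k : ℤ) : toModel (lampA k) = .inl (.ofAdd (Finsupp.single k 1)) := by
  rw [lampA, map_mul, map_mul, map_zpow, map_zpow, toModel_la, toModel_lt, LampModel.lampAt_eq]

lemma lampA_commute (p q : ℤ) : Commute (lampA p) (lampA q) := by
  have h := PresentedGroup.one_of_mem (rels := lampRels 2) (Set.mem_union_right _ ⟨p, q, rfl⟩)
  rwa [map_commutatorElement, commutatorElement_eq_one_iff_commute] at h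

lemma closure_la_lt : Subgroup.closure {la 2, lt 2} = ⊤ := by
  rw [← PresentedGroup.closure_range_of (lampRels 2)]
  congr 1
  ext x
  simp [la, lt, or_comm]

noncomputable def normalForm (I J : List ℤ) (r : ℤ) : Lamp 2 :=
  (I.map lampA).prod * (J.map fun q => lampA (-q)).prod * lt 2 ^ r

lemma commute_prod_lampA (I J : List ℤ) :
    Commute (I.map lampA).prod (J.map fun q => lampA (-q)).prod :=
  Commute.list_prod_left _ _ fun _ hx => Commute.list_prod_right _ _ fun _ hy => by
    obtain ⟨p, -, rfl⟩ := List.mem_map.1 hx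
    obtain ⟨q, -, rfl⟩ := List.mem_map.1 hy
    exact lampA_commute p (-q)

lemma prod_walk_la_lt (s : ℤ) (P : List ℤ) (e : ℤ) :
    (walk (la 2) (lt 2) s P e).prod = lt 2 ^ (-s) * (P.map lampA).prod * lt 2 ^ e :=
  prod_walk _ _ s P e

lemma prod_walk_la_lt_inv (s : ℤ) (P : List ℤ) (e : ℤ) :
    (walk (la 2) (lt 2)⁻¹ s P e).prod =
      lt 2 ^ s * (P.map fun q => lampA (-q)).prod * lt 2 ^ (-e) := by
  simp only [prod_walk, inv_zpow', neg_neg, lampA]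

lemma isWordIn_walk_la_lt (s : ℤ) (P : List ℤ) (e : ℤ) :
    IsWordIn {la 2, lt 2} (walk (la 2) (lt 2) s P e) :=
  isWordIn_walk (.inl (.inl rfl)) (.inl (.inr rfl)) s P e

lemma isWordIn_walk_la_lt_inv (s : ℤ) (P : List ℤ) (e : ℤ) :
    IsWordIn {la 2, lt 2} (walk (la 2) (lt 2)⁻¹ s P e) :=
  isWordIn_walk (.inl (.inl rfl)) (.inr (by rw [inv_inv]; exact .inr rfl)) s P e

lemma isWordIn_zpowWord_lt (k : ℤ) : IsWordIn {la 2, lt 2} (zpowWord (lt 2) k) :=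
  isWordIn_zpowWord (.inl (.inr rfl)) k

lemma wordLength_normalForm_le_left_first {I J : List ℤ} (hI : I.Pairwise (· ≤ ·))
    (hJ : J.Pairwise (· ≤ ·)) (hI0 : ∀ p ∈ I, 0 ≤ p) (hJ0 : ∀ q ∈ J, 0 ≤ q) (r : ℤ) :
    (wordLength {la 2, lt 2} (normalForm I J r) : ℤ) ≤
      I.length + J.length + (2 * J.getLastD 0 + I.getLastD 0 + |r - I.getLastD 0|) := by
  have hjl : 0 ≤ J.getLastD 0 :=
    (List.pairwise_cons.2 ⟨hJ0, hJ⟩).le_getLastD 0 List.mem_cons_self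
  let word := walk (la 2) (lt 2)⁻¹ 0 J (J.getLastD 0) ++
    walk (la 2) (lt 2) (-J.getLastD 0) I (I.getLastD 0) ++ zpowWord (lt 2) (r - I.getLastD 0)
  have hword : IsWordIn {la 2, lt 2} word :=
    ((isWordIn_walk_la_lt_inv _ _ _).append (isWordIn_walk_la_lt _ _ _)).append
      (isWordIn_zpowWord_lt _)
  have hprod : word.prod = normalForm I J r := by
    rw [normalForm, (commute_prod_lampA I J).eq]
    simp only [word, List.prod_append, prod_walk_la_lt, prod_walk_la_lt_inv, prod_zpowWord]
    group
  have hlen : (word.length : ℤ) =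
      I.length + J.length + (2 * J.getLastD 0 + I.getLastD 0 + |r - I.getLastD 0|) := by
    simp only [word, List.length_append, Nat.cast_add, length_zpowWord,
      length_walk_getLastD _ _ hJ hJ0 le_rfl, length_walk_getLastD _ _ hI hI0 (neg_nonpos.2 hjl)]
    ring
  rw [← hprod, ← hlen]
  exact_mod_cast wordLength_le_length hword

lemma wordLength_normalForm_le_right_first {I J : List ℤ} (hI : I.Pairwise (· ≤ ·))
    (hJ : J.Pairwise (· ≤ ·)) (hI0 : ∀ p ∈ I, 0 ≤ p) (hJ0 : ∀ q ∈ J, 0 ≤ q) (r : ℤ) :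
    (wordLength {la 2, lt 2} (normalForm I J r) : ℤ) ≤
      I.length + J.length + (2 * I.getLastD 0 + J.getLastD 0 + |r + J.getLastD 0|) := by
  have him : 0 ≤ I.getLastD 0 :=
    (List.pairwise_cons.2 ⟨hI0, hI⟩).le_getLastD 0 List.mem_cons_self
  let word := walk (la 2) (lt 2) 0 I (I.getLastD 0) ++
    walk (la 2) (lt 2)⁻¹ (-I.getLastD 0) J (J.getLastD 0) ++ zpowWord (lt 2) (r + J.getLastD 0)
  have hword : IsWordIn {la 2, lt 2} word :=
    ((isWordIn_walk_la_lt _ _ _).append (isWordIn_walk_la_lt_inv _ _ _)).append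
      (isWordIn_zpowWord_lt _)
  have hprod : word.prod = normalForm I J r := by
    simp only [word, normalForm, List.prod_append, prod_walk_la_lt, prod_walk_la_lt_inv,
      prod_zpowWord]
    group
  have hlen : (word.length : ℤ) =
      I.length + J.length + (2 * I.getLastD 0 + J.getLastD 0 + |r + J.getLastD 0|) := by
    simp only [word, List.length_append, Nat.cast_add, length_zpowWord,
      length_walk_getLastD _ _ hI hI0 le_rfl, length_walk_getLastD _ _ hJ hJ0 (neg_nonpos.2 him)]
    ring
  rw [← hprod, ← hlen]
  exact_mod_cast wordLength_le_length hword

lemma toModel_prod_lampA (L : List ℤ) :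
    toModel (L.map lampA).prod =
      .inl (.ofAdd (L.map fun k => Finsupp.single k (1 : ZMod 2)).sum) := by
  induction L with
  | nil => simp
  | cons p L ih => simp [toModel_lampA, ih]

lemma toModel_normalForm (I J : List ℤ) (r : ℤ) :
    toModel (normalForm I J r) =
      ⟨.ofAdd ((I ++ J.map Neg.neg).map fun k => Finsupp.single k (1 : ZMod 2)).sum,
        .ofAdd r⟩ := by
  have hJ : (J.map fun q => lampA (-q)) = (J.map Neg.neg).map lampA := by
    simp [Function.comp_def]
  rw [normalForm, hJ, map_mul, map_mul, toModel_prod_lampA, toModel_prod_lampA, map_zpow,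
    toModel_lt, LampModel.t_zpow, ← map_mul, ← ofAdd_add, List.map_append, List.sum_append,
    SemidirectProduct.mk_eq_inl_mul_inr]

lemma le_wordLength_normalForm {I J : List ℤ} (hI : I.SortedLT) (hJ : J.SortedLT)
    (hI0 : ∀ p ∈ I, 0 ≤ p) (hJ0 : ∀ q ∈ J, 0 < q) (r : ℤ) :
    I.length + J.length + min (2 * J.getLastD 0 + I.getLastD 0 + |r - I.getLastD 0|)
      (2 * I.getLastD 0 + J.getLastD 0 + |r + J.getLastD 0|) ≤
      (wordLength {la 2, lt 2} (normalForm I J r) : ℤ) := by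
  classical
  set L := I ++ J.map Neg.neg
  have hL : L.Nodup := nodup_append_map_neg hI.nodup hJ.nodup hI0 hJ0
  set F := (L.map fun k => Finsupp.single k (1 : ZMod 2)).sum
  have hF : F.support = L.toFinset := Finsupp.support_sum_map_single hL one_ne_zero
  have hlit {p : ℤ} (hp : p ∈ L) : F p ≠ 0 :=
    Finsupp.mem_support_iff.1 (hF ▸ List.mem_toFinset.2 hp)
  have hI' : (0 :: I).Pairwise (· ≤ ·) := List.pairwise_cons.2 ⟨hI0, hI.sortedLE.pairwise⟩
  have hJ' : (0 :: J).Pairwise (· ≤ ·) :=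
    List.pairwise_cons.2 ⟨fun q hq => (hJ0 q hq).le, hJ.sortedLE.pairwise⟩
  have hp : I.getLastD 0 = 0 ∨ F (I.getLastD 0) ≠ 0 :=
    (List.mem_cons.1 List.getLastD_mem_cons).imp_right fun h => hlit (List.mem_append_left _ h)
  have hq : J.getLastD 0 = 0 ∨ F (-J.getLastD 0) ≠ 0 :=
    (List.mem_cons.1 List.getLastD_mem_cons).imp_right fun h =>
      hlit (List.mem_append_right _ (List.mem_map_of_mem h))
  obtain ⟨l, hl, hlw, hlen⟩ :=
    exists_isWordIn_length_eq_wordLength closure_la_lt (normalForm I J r)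
  have hml : IsWordIn {LampModel.a, LampModel.t} (l.map toModel) := by
    simpa [Set.image_pair, toModel_la, toModel_lt] using hl.map toModel
  have hprod : (l.map toModel).prod = ⟨.ofAdd F, .ofAdd r⟩ := by
    rw [← map_list_prod, hlw, toModel_normalForm]
  have key := LampModel.le_length_of_isWordIn hml (hI'.le_getLastD 0 List.mem_cons_self)
    (hJ'.le_getLastD 0 List.mem_cons_self) (by rw [hprod]; exact hp) (by rw [hprod]; exact hq)
  simp only [hprod, LampModel.lamps, LampModel.cursor, toAdd_ofAdd, hF,
    List.toFinset_card_of_nodup hL, List.length_map, hlen, L, List.length_append] at key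
  push_cast at key
  exact key

theorem wordLength_normalForm {I J : List ℤ} (hI : I.SortedLT) (hJ : J.SortedLT)
    (hI0 : ∀ p ∈ I, 0 ≤ p) (hJ0 : ∀ q ∈ J, 0 < q) (r : ℤ) :
    (wordLength {la 2, lt 2} (normalForm I J r) : ℤ) =
      I.length + J.length + min (2 * J.getLastD 0 + I.getLastD 0 + |r - I.getLastD 0|)
        (2 * I.getLastD 0 + J.getLastD 0 + |r + J.getLastD 0|) := by
  have hJ0' : ∀ q ∈ J, 0 ≤ q := fun q hq => (hJ0 q hq).le
  refine le_antisymm ?_ (le_wordLength_normalForm hI hJ hI0 hJ0 r)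
  rw [← min_add_add_left]
  exact le_min
    (wordLength_normalForm_le_left_first hI.sortedLE.pairwise hJ.sortedLE.pairwise hI0 hJ0' r)
    (wordLength_normalForm_le_right_first hI.sortedLE.pairwise hJ.sortedLE.pairwise hI0 hJ0' r)

/-- Word length formula for `L₂` with generating set `{a, t}`: if
`w = a_{i₁} ⋯ a_{i_m} a_{−j₁} ⋯ a_{−j_l} t^r` with `0 ≤ i₁ < ⋯ < i_m` and
`0 < j₁ < ⋯ < j_l`, then `|w| = m + l + min(2 j_l + i_m + |r − i_m|, 2 i_m + j_l + |r + j_l|)`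
(with `i_m`, `j_l` interpreted as `0` when `m = 0` resp. `l = 0`). -/
theorem lamplighter_wordLength_formula (m l : ℕ) (r : ℤ)
    (i : Fin m → ℤ) (j : Fin l → ℤ) (hi : StrictMono i) (hj : StrictMono j)
    (hi0 : ∀ k, 0 ≤ i k) (hj0 : ∀ k, 0 < j k) :
    letI S : Set (Lamp 2) := {la 2, lt 2}
    letI w := (List.ofFn fun k => lampA (i k)).prod *
      (List.ofFn fun k => lampA (-(j k))).prod * lt 2 ^ r
    letI im : ℤ := ((List.ofFn i).getLast?).getD 0
    letI jl : ℤ := ((List.ofFn j).getLast?).getD 0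
    (wordLength S w : ℤ) =
      m + l + min (2 * jl + im + |r - im|) (2 * im + jl + |r + jl|) := by
  have key := wordLength_normalForm hi.sortedLT_ofFn hj.sortedLT_ofFn
    (by simpa [List.mem_ofFn] using hi0) (by simpa [List.mem_ofFn] using hj0) r
  simpa [normalForm, List.map_ofFn, Function.comp_def, List.getLastD_eq_getLast?] using key
end

section
/- The lamplighter group L_m = ℤ_m ≀ ℤ (m ≥ 2) has infinitely many cone types with respect to the generating set {a, t}. In particular, for distinct n, the elements t^n a t^{−2n} a represent elements with pairwise distinct cone types, since the cone type of t^n a t^{−2n} a contains the geodesic extension t^n but not t^{n+1}. -/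
open scoped commutatorElement

/-- The cone type of `g` with respect to the generating set `S`: the set of words `u`
over `S ∪ S⁻¹` all of whose prefixes extend `g` geodesically. -/
noncomputable def coneType {G : Type*} [Group G] (S : Set G) (g : G) : Set (List G) :=
  {u | (∀ x ∈ u, x ∈ S ∨ x⁻¹ ∈ S) ∧
    ∀ k ≤ u.length, wordLength S (g * (u.take k).prod) = wordLength S g + k}

/-!
The lamplighter group acts on the right on configurations `(f, p)` (lamp states `f : ℤ →₀ ℤ/m`,
cursor `p : ℤ`): `a` toggles the lamp under the cursor and `t` moves the cursor one step right.
If `[-L, R]` is the smallest interval containing `0`, `p` and the lit lamps, then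
`2 (R + L) - |p| + #lit` grows by at most one per generator, so it bounds the word length from
below. This gives `|tⁿ a t⁻²ⁿ a tᵏ| = 3n + k + 2` for `k ≤ n`, so `tⁿ` lies in the cone type of
`tⁿ a t⁻²ⁿ a`. Since the lamps at `n` and `-n` commute,
`tⁿ a t⁻²ⁿ a tⁿ⁺¹ = t⁻ⁿ a t²ⁿ a t⁻⁽ⁿ⁻¹⁾` has length at most `4n + 1 < 4n + 3`, so `tⁿ⁺¹` is not in
that cone type, while it is in the cone type of `tⁿ' a t⁻²ⁿ' a` for every `n' > n`.
-/

section WordLength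

variable {G : Type*} [Group G] {S : Set G}

lemma wordLength_prod_le {l : List G} (hl : ∀ x ∈ l, x ∈ S ∨ x⁻¹ ∈ S) :
    wordLength S l.prod ≤ l.length :=
  Nat.sInf_le ⟨l, hl, rfl, rfl⟩

lemma potential_mul_prod_le (φ : G → ℤ) (hφ : ∀ g s, (s ∈ S ∨ s⁻¹ ∈ S) → φ (g * s) ≤ φ g + 1)
    (g : G) {l : List G} (hl : ∀ x ∈ l, x ∈ S ∨ x⁻¹ ∈ S) :
    φ (g * l.prod) ≤ φ g + l.length := by
  induction l generalizing g with
  | nil => simp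
  | cons s l ih =>
    have hs := hφ g s (hl s List.mem_cons_self)
    have hl' := ih (g * s) fun x hx ↦ hl x (List.mem_cons_of_mem s hx)
    rw [List.prod_cons, ← mul_assoc, List.length_cons]
    push_cast
    linarith

lemma le_wordLength_of_potential (φ : G → ℤ) (hφ₁ : φ 1 ≤ 0)
    (hφ : ∀ g s, (s ∈ S ∨ s⁻¹ ∈ S) → φ (g * s) ≤ φ g + 1)
    {g : G} (hg : ∃ l : List G, (∀ x ∈ l, x ∈ S ∨ x⁻¹ ∈ S) ∧ l.prod = g) :
    φ g ≤ wordLength S g := by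
  obtain ⟨l, hl, rfl⟩ := hg
  obtain ⟨l', hl', hlen, hprod⟩ : wordLength S l.prod ∈ _ :=
    Nat.sInf_mem ⟨l.length, l, hl, rfl, rfl⟩
  rw [← hlen, ← hprod]
  simpa using (potential_mul_prod_le φ hφ 1 hl').trans (by linarith)

lemma replicate_mem_coneType_iff {s : G} (hs : s ∈ S) {g : G} {j : ℕ} :
    List.replicate j s ∈ coneType S g ↔
      ∀ k ≤ j, wordLength S (g * s ^ k) = wordLength S g + k := by
  simp +contextual [coneType, List.mem_replicate, List.take_replicate, hs]

end WordLength

namespace Lamplighter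

open Finsupp Finset MulOpposite

noncomputable section

section Config

variable {M : Type*}

abbrev Config (M : Type*) [Zero M] := (ℤ →₀ M) × ℤ

def lampPerm [AddGroup M] (c : M) : Equiv.Perm (Config M) where
  toFun x := (x.1 + single x.2 c, x.2)
  invFun x := (x.1 - single x.2 c, x.2)
  left_inv x := by simp
  right_inv x := by simp

def movePerm [Zero M] : Equiv.Perm (Config M) where
  toFun x := (x.1, x.2 + 1)
  invFun x := (x.1, x.2 - 1)
  left_inv x := by simp
  right_inv x := by simp

@[simp] lemma lampPerm_apply [AddGroup M] (c : M) (x : Config M) :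
    lampPerm c x = (x.1 + single x.2 c, x.2) := rfl

@[simp] lemma movePerm_apply [Zero M] (x : Config M) : movePerm x = (x.1, x.2 + 1) := rfl

@[simp] lemma movePerm_inv_apply [Zero M] (x : Config M) : movePerm⁻¹ x = (x.1, x.2 - 1) := rfl

lemma lampPerm_inv [AddGroup M] (c : M) : (lampPerm c)⁻¹ = lampPerm (-c) := by
  ext x <;> simp [Equiv.Perm.inv_def, lampPerm, sub_eq_add_neg]

lemma lampPerm_pow_apply [AddGroup M] (c : M) (k : ℕ) (x : Config M) :
    (lampPerm c ^ k) x = (x.1 + single x.2 (k • c), x.2) := by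
  induction k with
  | zero => simp
  | succ k ih => simp [pow_succ', ih, succ_nsmul, add_assoc]

lemma movePerm_zpow_apply [Zero M] (i : ℤ) (x : Config M) :
    (movePerm ^ i) x = (x.1, x.2 + i) := by
  induction i using Int.induction_on generalizing x with
  | zero => simp
  | succ i ih =>
    rw [zpow_add_one, Equiv.Perm.mul_apply, movePerm_apply, ih]
    congr 1; ring
  | pred i ih =>
    rw [zpow_sub_one, Equiv.Perm.mul_apply, movePerm_inv_apply, ih]
    congr 1; ring

/- Truncated at `0`, so that `[-leftmost f, rightmost f]` always contains the origin. -/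
def rightmost [Zero M] (f : ℤ →₀ M) : ℕ := f.support.sup Int.toNat

def leftmost [Zero M] (f : ℤ →₀ M) : ℕ := f.support.sup fun i ↦ (-i).toNat

/- `2 (R + L) - |p|` is the length of a shortest cursor path from `0` that covers `[-L, R]` and
ends at `p`, where `[-L, R]` is the hull of `0`, `p` and the lit lamps. -/
def potential [Zero M] (x : Config M) : ℤ :=
  2 * (max (rightmost x.1 : ℤ) x.2 + max (leftmost x.1 : ℤ) (-x.2)) - |x.2| + #x.1.support

lemma potential_zero [Zero M] : potential ((0, 0) : Config M) = 0 := by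
  simp [potential, rightmost, leftmost]

lemma potential_lampPerm_le [AddGroup M] (c : M) (x : Config M) :
    potential (lampPerm c x) ≤ potential x + 1 := by
  classical
  obtain ⟨f, p⟩ := x
  have hsupp : (f + single p c).support ⊆ insert p f.support :=
    support_add.trans <| union_subset (subset_insert _ _) <|
      support_single_subset.trans (singleton_subset_iff.2 (mem_insert_self _ _))
  have hright : rightmost (f + single p c) ≤ max p.toNat (rightmost f) :=
    (sup_mono hsupp).trans_eq (sup_insert ..)
  have hleft : leftmost (f + single p c) ≤ max (-p).toNat (leftmost f) :=
    (sup_mono hsupp).trans_eq (sup_insert ..)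
  have hcard : #(f + single p c).support ≤ #f.support + 1 :=
    (card_le_card hsupp).trans (card_insert_le _ _)
  simp only [potential, lampPerm_apply]
  omega

lemma potential_movePerm_zpow_le [Zero M] (i : ℤ) (x : Config M) :
    potential ((movePerm ^ i) x) ≤ potential x + |i| := by
  simp only [potential, movePerm_zpow_apply, abs_eq_max_neg]
  omega

lemma potential_single_add_single [AddGroup M] {c : M} (hc : c ≠ 0) {n k : ℕ} (hn : 1 ≤ n)
    (hk : k ≤ n) :
    potential ((single (n : ℤ) c + single (-(n : ℤ)) c, -(n : ℤ) + k) : Config M) =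
      3 * n + k + 2 := by
  classical
  have hsupp : (single (n : ℤ) c + single (-(n : ℤ)) c).support = {(n : ℤ), -(n : ℤ)} :=
    support_single_add_single (by omega) hc hc
  simp only [potential, rightmost, leftmost, hsupp, sup_insert, sup_singleton,
    card_pair (show (n : ℤ) ≠ -n by omega), abs_eq_max_neg]
  omega

end Config

variable (m : ℕ)

def generatorPerm : Bool → (Equiv.Perm (Config (ZMod m)))ᵐᵒᵖ
  | true => op (lampPerm 1)
  | false => op movePerm

lemma unop_conj_generatorPerm_apply (i : ℤ) (x : Config (ZMod m)) :
    unop (generatorPerm m false ^ i * generatorPerm m true * generatorPerm m false ^ (-i)) x =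
      (x.1 + single (x.2 + i) 1, x.2) := by
  simp only [generatorPerm, unop_mul, unop_zpow, unop_op, Equiv.Perm.mul_apply,
    movePerm_zpow_apply, lampPerm_apply, add_neg_cancel_right]

lemma lift_generatorPerm_eq_one : ∀ r ∈ lampRels m, FreeGroup.lift (generatorPerm m) r = 1 := by
  rintro r (rfl | ⟨i, j, rfl⟩)
  · refine unop_injective (Equiv.ext fun x ↦ ?_)
    simp [generatorPerm, lampPerm_pow_apply]
  · simp only [map_commutatorElement, map_mul, map_zpow, FreeGroup.lift_apply_of,
      commutatorElement_eq_one_iff_mul_comm]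
    refine unop_injective (Equiv.ext fun x ↦ ?_)
    rw [unop_mul (_ * _ * _ ^ (-i)), unop_mul (_ * _ * _ ^ (-j)), Equiv.Perm.mul_apply,
      Equiv.Perm.mul_apply, unop_conj_generatorPerm_apply, unop_conj_generatorPerm_apply,
      unop_conj_generatorPerm_apply, unop_conj_generatorPerm_apply, add_right_comm]

/- Landing in the opposite group makes this a right action: reading a word from left to right
performs its moves in that order. -/
def rightAction : Lamp m →* (Equiv.Perm (Config (ZMod m)))ᵐᵒᵖ :=
  PresentedGroup.toGroup (lift_generatorPerm_eq_one m)

def config (g : Lamp m) : Config (ZMod m) := unop (rightAction m g) (0, 0)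

def twoLamps (n : ℕ) : Lamp m := lt m ^ n * la m * (lt m ^ (2 * n))⁻¹ * la m

variable {m}

lemma config_one : config m 1 = (0, 0) := by simp [config]

lemma config_mul (g h : Lamp m) : config m (g * h) = unop (rightAction m h) (config m g) := by
  simp [config]

lemma config_mul_la (g : Lamp m) : config m (g * la m) = lampPerm 1 (config m g) := by
  rw [config_mul]; rfl

lemma config_mul_la_inv (g : Lamp m) : config m (g * (la m)⁻¹) = lampPerm (-1) (config m g) := by
  rw [config_mul, map_inv, unop_inv, ← lampPerm_inv]; rfl

lemma config_mul_lt_zpow (g : Lamp m) (i : ℤ) :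
    config m (g * lt m ^ i) = (movePerm ^ i) (config m g) := by
  rw [config_mul, map_zpow, unop_zpow]; rfl

lemma potential_config_mul_le (g s : Lamp m)
    (hs : s ∈ ({la m, lt m} : Set (Lamp m)) ∨ s⁻¹ ∈ ({la m, lt m} : Set (Lamp m))) :
    potential (config m (g * s)) ≤ potential (config m g) + 1 := by
  rcases hs with (rfl | rfl) | (hs | hs)
  · rw [config_mul_la]; exact potential_lampPerm_le _ _
  · have := potential_movePerm_zpow_le 1 (config m g)
    rwa [← config_mul_lt_zpow, zpow_one, abs_one] at this
  · rw [inv_eq_iff_eq_inv.mp hs, config_mul_la_inv]; exact potential_lampPerm_le _ _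
  · have := potential_movePerm_zpow_le (-1) (config m g)
    rwa [← config_mul_lt_zpow, zpow_neg_one, ← inv_eq_iff_eq_inv.mp hs, abs_neg, abs_one] at this

lemma commute_conj_la (i j : ℤ) :
    Commute (lt m ^ i * la m * lt m ^ (-i)) (lt m ^ j * la m * lt m ^ (-j)) := by
  have := PresentedGroup.one_of_mem (rels := lampRels m) (Or.inr ⟨i, j, rfl⟩)
  simp only [map_commutatorElement, map_mul, map_zpow] at this
  exact commutatorElement_eq_one_iff_mul_comm.mp this

lemma config_twoLamps_mul_lt_pow (n k : ℕ) :
    config m (twoLamps m n * lt m ^ k) =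
      (single (n : ℤ) 1 + single (-(n : ℤ)) 1, -(n : ℤ) + k) := by
  rw [twoLamps, ← one_mul (lt m ^ n), ← zpow_natCast, ← zpow_natCast, ← zpow_natCast, ← zpow_neg]
  simp only [config_mul_lt_zpow, config_mul_la, config_one, movePerm_zpow_apply, lampPerm_apply,
    zero_add]
  rw [show (n : ℤ) + -((2 * n : ℕ) : ℤ) = -n by omega]

lemma twoLamps_mul_lt_pow_eq_prod (n k : ℕ) :
    twoLamps m n * lt m ^ k =
      (List.replicate n (lt m) ++ [la m] ++ List.replicate (2 * n) (lt m)⁻¹ ++ [la m] ++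
        List.replicate k (lt m)).prod := by
  simp [twoLamps, List.prod_replicate, mul_assoc]

lemma twoLamps_mul_lt_pow_succ_eq_prod {n : ℕ} (hn : 1 ≤ n) :
    twoLamps m n * lt m ^ (n + 1) =
      (List.replicate n (lt m)⁻¹ ++ [la m] ++ List.replicate (2 * n) (lt m) ++ [la m] ++
        List.replicate (n - 1) (lt m)⁻¹).prod := by
  have hsub : ((n - 1 : ℕ) : ℤ) = n - 1 := by omega
  simp only [List.prod_append, List.prod_replicate, List.prod_singleton, twoLamps, ← zpow_natCast,
    ← zpow_neg, inv_zpow', Nat.cast_add, Nat.cast_mul, hsub]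
  calc _ = (lt m ^ (n : ℤ) * la m * lt m ^ (-(n : ℤ))) *
        (lt m ^ (-(n : ℤ)) * la m * lt m ^ (-(-(n : ℤ)))) * lt m := by group
    _ = (lt m ^ (-(n : ℤ)) * la m * lt m ^ (-(-(n : ℤ)))) *
        (lt m ^ (n : ℤ) * la m * lt m ^ (-(n : ℤ))) * lt m := by rw [commute_conj_la]
    _ = _ := by group

lemma wordLength_twoLamps_mul_lt_pow (hm : 2 ≤ m) {n k : ℕ} (hn : 1 ≤ n) (hk : k ≤ n) :
    wordLength {la m, lt m} (twoLamps m n * lt m ^ k) = 3 * n + k + 2 := by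
  have hword : ∀ x ∈ List.replicate n (lt m) ++ [la m] ++ List.replicate (2 * n) (lt m)⁻¹ ++
      [la m] ++ List.replicate k (lt m), x ∈ ({la m, lt m} : Set (Lamp m)) ∨
        x⁻¹ ∈ ({la m, lt m} : Set (Lamp m)) := by
    simp [or_imp, forall_and]
  have : Fact (1 < m) := ⟨hm⟩
  have hlower : 3 * (n : ℤ) + k + 2 ≤ wordLength {la m, lt m} (twoLamps m n * lt m ^ k) := by
    rw [← potential_single_add_single (one_ne_zero (α := ZMod m)) hn hk, ← config_twoLamps_mul_lt_pow]
    exact le_wordLength_of_potential (fun g ↦ potential (config m g))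
      (by simp [config_one, potential_zero]) potential_config_mul_le
      ⟨_, hword, (twoLamps_mul_lt_pow_eq_prod n k).symm⟩
  refine le_antisymm ?_ (by exact_mod_cast hlower)
  rw [twoLamps_mul_lt_pow_eq_prod]
  refine (wordLength_prod_le hword).trans_eq ?_
  simp only [List.length_append, List.length_replicate, List.length_singleton]
  ring

lemma wordLength_twoLamps_mul_lt_pow_succ_le {n : ℕ} (hn : 1 ≤ n) :
    wordLength {la m, lt m} (twoLamps m n * lt m ^ (n + 1)) ≤ 4 * n + 1 := by
  rw [twoLamps_mul_lt_pow_succ_eq_prod hn]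
  refine (wordLength_prod_le ?_).trans_eq ?_
  · simp [or_imp, forall_and]
  · simp only [List.length_append, List.length_replicate, List.length_singleton]
    omega

lemma wordLength_twoLamps (hm : 2 ≤ m) {n : ℕ} (hn : 1 ≤ n) :
    wordLength {la m, lt m} (twoLamps m n) = 3 * n + 2 := by
  simpa using wordLength_twoLamps_mul_lt_pow hm hn (Nat.zero_le n)

lemma replicate_lt_mem_coneType_twoLamps (hm : 2 ≤ m) {n j : ℕ} (hn : 1 ≤ n) (hj : j ≤ n) :
    List.replicate j (lt m) ∈ coneType {la m, lt m} (twoLamps m n) := by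
  rw [replicate_mem_coneType_iff (Set.mem_insert_of_mem _ (Set.mem_singleton (lt m)))]
  intro k hk
  rw [wordLength_twoLamps_mul_lt_pow hm hn (hk.trans hj), wordLength_twoLamps hm hn]
  ring

lemma replicate_succ_lt_not_mem_coneType_twoLamps (hm : 2 ≤ m) {n : ℕ} (hn : 1 ≤ n) :
    List.replicate (n + 1) (lt m) ∉ coneType {la m, lt m} (twoLamps m n) := by
  rw [replicate_mem_coneType_iff (Set.mem_insert_of_mem _ (Set.mem_singleton (lt m)))]
  intro h
  have hlong := h (n + 1) le_rfl
  rw [wordLength_twoLamps hm hn] at hlong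
  have hshort := wordLength_twoLamps_mul_lt_pow_succ_le (m := m) hn
  omega

lemma coneType_twoLamps_ne (hm : 2 ≤ m) {n₁ n₂ : ℕ} (h₁ : 1 ≤ n₁) (h₂ : 1 ≤ n₂) (hne : n₁ ≠ n₂) :
    coneType {la m, lt m} (twoLamps m n₁) ≠ coneType {la m, lt m} (twoLamps m n₂) := by
  wlog hlt : n₁ < n₂ generalizing n₁ n₂
  · exact (this h₂ h₁ hne.symm (by omega)).symm
  intro h
  apply replicate_succ_lt_not_mem_coneType_twoLamps hm h₁
  rw [h]
  exact replicate_lt_mem_coneType_twoLamps hm h₂ hlt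

end

end Lamplighter

/-- The lamplighter group `L_m` (`m ≥ 2`) has infinitely many cone types with respect to
the wreath product generating set `{a, t}`.  In particular the elements
`tⁿ a t⁻²ⁿ a` have pairwise distinct cone types, since the cone type of `tⁿ a t⁻²ⁿ a`
contains `tⁿ` but not `tⁿ⁺¹`. -/
theorem lamplighter_infinitely_many_cone_types (m : ℕ) (hm : 2 ≤ m) :
    letI S : Set (Lamp m) := {la m, lt m}
    letI e : ℕ → Lamp m := fun n => lt m ^ n * la m * (lt m ^ (2 * n))⁻¹ * la m
    Set.Infinite (Set.range (coneType S)) ∧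
    (∀ n : ℕ, 1 ≤ n → List.replicate n (lt m) ∈ coneType S (e n) ∧
      List.replicate (n + 1) (lt m) ∉ coneType S (e n)) ∧
    (∀ n₁ n₂ : ℕ, 1 ≤ n₁ → 1 ≤ n₂ → n₁ ≠ n₂ → coneType S (e n₁) ≠ coneType S (e n₂)) := by
  refine ⟨?_, fun n hn ↦ ⟨Lamplighter.replicate_lt_mem_coneType_twoLamps hm hn le_rfl,
    Lamplighter.replicate_succ_lt_not_mem_coneType_twoLamps hm hn⟩,
    fun _ _ ↦ Lamplighter.coneType_twoLamps_ne hm⟩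
  have hinj : Function.Injective
      fun n : ℕ ↦ coneType {la m, lt m} (Lamplighter.twoLamps m (n + 1)) :=
    fun _ _ h ↦ by_contra fun hne ↦
      Lamplighter.coneType_twoLamps_ne hm (by omega) (by omega) (by omega) h
  exact Set.infinite_of_injective_forall_mem hinj fun n ↦ ⟨_, rfl⟩
end

section
/- Swapping Lemma for counter languages: if L is a language accepted by a ℤ^k-automaton, then there is a constant s > 0 such that every w ∈ L with |w| ≥ 2s + 1 can be written w = u ++ x ++ y ++ z with |u ++ x ++ y| ≤ 2s + 1, |x| > 0, |y| > 0, and u ++ y ++ x ++ z ∈ L. -/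
/-- A (non-deterministic) `G`-automaton over the alphabet `σ` with state set `Q`:
a finite directed graph with a start vertex, accept vertices, and edges labelled
by pairs consisting of a letter of `σ` or `ε` (encoded by `Option σ`) together
with an element of `G`. -/
structure GAutomaton (G : Type*) [Group G] (σ : Type*) (Q : Type*) where
  start : Q
  accept : Set Q
  edges : Q → Q → Set (Option σ × G)

/-- `A.Reaches q w g q'` means there is a path in `A` from `q` to `q'` reading
the word `w` whose `G`-labels multiply to `g`. -/
inductive GAutomaton.Reaches {G σ Q : Type*} [Group G] (A : GAutomaton G σ Q) :
    Q → List σ → G → Q → Prop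
  | refl (q : Q) : Reaches A q [] 1 q
  | letter {q q' r : Q} {a : σ} {w : List σ} {g h : G} :
      (some a, g) ∈ A.edges q q' → Reaches A q' w h r → Reaches A q (a :: w) (g * h) r
  | eps {q q' r : Q} {w : List σ} {g h : G} :
      (none, g) ∈ A.edges q q' → Reaches A q' w h r → Reaches A q w (g * h) r

/-- The language accepted by a `G`-automaton: words labelling a path from the start
vertex to an accept vertex whose `G`-labels multiply to the identity. -/
def GAutomaton.lang {G σ Q : Type*} [Group G] (A : GAutomaton G σ Q) : Language σ :=
  {w | ∃ q ∈ A.accept, A.Reaches A.start w 1 q}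

/-- A language is `k`-counter if it is accepted by a `ℤᵏ`-automaton with finitely
many states. -/
def Language.IsCounter {σ : Type*} (k : ℕ) (L : Language σ) : Prop :=
  ∃ (Q : Type) (_ : Fintype Q) (A : GAutomaton (Multiplicative (Fin k → ℤ)) σ Q),
    A.lang = L

/-- Paths compose. -/
lemma GAutomaton.Reaches.append {G σ Q : Type*} [Group G] {A : GAutomaton G σ Q}
    {q q' r : Q} {w1 w2 : List σ} {g1 g2 : G}
    (h1 : A.Reaches q w1 g1 q') (h2 : A.Reaches q' w2 g2 r) :
    A.Reaches q (w1 ++ w2) (g1 * g2) r := by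
  induction h1 generalizing w2 g2 with
  | refl => simpa using h2
  | letter e _ ih =>
      rw [mul_assoc]
      exact .letter e (ih h2)
  | eps e _ ih =>
      rw [mul_assoc]
      exact .eps e (ih h2)

/-- A path can be cut at every letter position, consistently. -/
lemma GAutomaton.Reaches.cuts {G σ Q : Type*} [Group G] {A : GAutomaton G σ Q}
    {q r : Q} {g : G} {w : List σ} (h : A.Reaches q w g r) :
    ∃ (f : ℕ → Q) (c : ℕ → G), f 0 = q ∧ c 0 = 1 ∧
      A.Reaches (f w.length) [] ((c w.length)⁻¹ * g) r ∧
      ∀ i j, i ≤ j → A.Reaches (f i) ((w.take j).drop i) ((c i)⁻¹ * c j) (f j) := by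
  induction h with
  | refl q =>
      exact ⟨fun _ => q, fun _ => 1, rfl, rfl, by simpa using GAutomaton.Reaches.refl (A := A) q,
        fun i j _ => by simpa using GAutomaton.Reaches.refl (A := A) q⟩
  | @letter q q' r a w g h e hr ih =>
      obtain ⟨f, c, hf0, hc0, hlast, hseg⟩ := ih
      refine ⟨fun i => if i = 0 then q else f (i - 1),
        fun i => if i = 0 then 1 else g * c (i - 1), by simp, by simp, ?_, ?_⟩
      · have hne : w.length + 1 ≠ 0 := by omega
        simp only [List.length_cons, if_neg hne, Nat.add_sub_cancel]
        have hprod : (g * c w.length)⁻¹ * (g * h) = (c w.length)⁻¹ * h := by group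
        rw [hprod]; exact hlast
      · intro i j hij
        rcases Nat.eq_zero_or_pos i with hi | hi
        · rcases Nat.eq_zero_or_pos j with hj | hj
          · subst hi; subst hj
            simpa using GAutomaton.Reaches.refl (A := A) q
          · subst hi
            obtain ⟨j', rfl⟩ := Nat.exists_eq_succ_of_ne_zero (by omega : j ≠ 0)
            simp only [if_pos rfl, if_neg (Nat.succ_ne_zero j'), Nat.succ_sub_one,
              List.take_succ_cons, List.drop_zero, inv_one, one_mul]
            have hs := hseg 0 j' (Nat.zero_le _)
            rw [hf0, hc0, inv_one, one_mul, List.drop_zero] at hs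
            simpa using GAutomaton.Reaches.letter e hs
        · have hj : 0 < j := lt_of_lt_of_le hi hij
          obtain ⟨i', rfl⟩ := Nat.exists_eq_succ_of_ne_zero (by omega : i ≠ 0)
          obtain ⟨j', rfl⟩ := Nat.exists_eq_succ_of_ne_zero (by omega : j ≠ 0)
          simp only [if_neg (Nat.succ_ne_zero i'), if_neg (Nat.succ_ne_zero j'),
            Nat.succ_sub_one, List.take_succ_cons, List.drop_succ_cons]
          have hprod : (g * c i')⁻¹ * (g * c j') = (c i')⁻¹ * c j' := by group
          rw [hprod]
          exact hseg i' j' (by omega)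
  | @eps q q' r w g h e hr ih =>
      obtain ⟨f, c, hf0, hc0, hlast, hseg⟩ := ih
      refine ⟨fun i => if i = 0 then q else f i,
        fun i => if i = 0 then 1 else g * c i, by simp, by simp, ?_, ?_⟩
      · rcases Nat.eq_zero_or_pos w.length with hw | hw
        · simp only [hw, if_pos rfl, inv_one, one_mul]
          have hs := hlast
          rw [hw, hf0, hc0, inv_one, one_mul] at hs
          simpa using GAutomaton.Reaches.eps e hs
        · simp only [if_neg (by omega : w.length ≠ 0)]
          have hprod : (g * c w.length)⁻¹ * (g * h) = (c w.length)⁻¹ * h := by group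
          rw [hprod]; exact hlast
      · intro i j hij
        rcases Nat.eq_zero_or_pos i with hi | hi
        · rcases Nat.eq_zero_or_pos j with hj | hj
          · subst hi; subst hj
            simpa using GAutomaton.Reaches.refl (A := A) q
          · subst hi
            simp only [if_pos rfl, if_neg (by omega : j ≠ 0), inv_one, one_mul, List.drop_zero]
            have hs := hseg 0 j (Nat.zero_le _)
            rw [hf0, hc0, inv_one, one_mul] at hs
            simpa using GAutomaton.Reaches.eps e hs
        · have hj : 0 < j := lt_of_lt_of_le hi hij
          simp only [if_neg (by omega : i ≠ 0), if_neg (by omega : j ≠ 0)]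
          have hprod : (g * c i)⁻¹ * (g * c j) = (c i)⁻¹ * c j := by group
          rw [hprod]
          exact hseg i j hij
  
/-- Sort three distinct naturals satisfying a predicate. -/
lemma sort3 {P : ℕ → Prop} {a b c : ℕ} (hab : a ≠ b) (hac : a ≠ c) (hbc : b ≠ c)
    (ha : P a) (hb : P b) (hc : P c) :
    ∃ i j l, i < j ∧ j < l ∧ P i ∧ P j ∧ P l := by
  rcases lt_trichotomy a b with h | h | h
  · rcases lt_trichotomy b c with h' | h' | h'
    · exact ⟨a, b, c, h, h', ha, hb, hc⟩
    · exact absurd h' hbc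
    · rcases lt_trichotomy a c with h'' | h'' | h''
      · exact ⟨a, c, b, h'', h', ha, hc, hb⟩
      · exact absurd h'' hac
      · exact ⟨c, a, b, h'', h, hc, ha, hb⟩
  · exact absurd h hab
  · rcases lt_trichotomy a c with h' | h' | h'
    · exact ⟨b, a, c, h, h', hb, ha, hc⟩
    · exact absurd h' hac
    · rcases lt_trichotomy b c with h'' | h'' | h''
      · exact ⟨b, c, a, h'', h', hb, hc, ha⟩
      · exact absurd h'' hbc
      · exact ⟨c, b, a, h'', h, hc, hb, ha⟩

/-- Swapping Lemma for counter languages. -/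
theorem swapping_lemma {σ : Type*} (k : ℕ) (L : Language σ) (hL : L.IsCounter k) :
    ∃ s : ℕ, 0 < s ∧ ∀ w ∈ L, 2 * s + 1 ≤ w.length →
      ∃ u x y z : List σ, w = u ++ x ++ y ++ z ∧ (u ++ x ++ y).length ≤ 2 * s + 1 ∧
        0 < x.length ∧ 0 < y.length ∧ u ++ y ++ x ++ z ∈ L := by
  classical
  obtain ⟨Q, _inst, A, hA⟩ := hL
  haveI : Nonempty Q := ⟨A.start⟩
  set m := Fintype.card Q with hm
  refine ⟨m, Fintype.card_pos, ?_⟩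
  intro w hw hlen
  rw [← hA] at hw
  obtain ⟨qf, hqf, hpath⟩ := hw
  obtain ⟨f, c, hf0, hc0, hlast, hseg⟩ := hpath.cuts
  -- pigeonhole: among positions 1, …, 2m+1 some state occurs three times
  have hcard : Fintype.card Q * 2 < Fintype.card (Fin (2 * m + 1)) := by
    simp only [Fintype.card_fin]; omega
  obtain ⟨q0, hq0⟩ := Fintype.exists_lt_card_fiber_of_mul_lt_card
    (fun t : Fin (2 * m + 1) => f ((t : ℕ) + 1)) hcard
  rw [Finset.two_lt_card_iff] at hq0
  obtain ⟨a, b, d, ha, hb, hd, hab, had, hbd⟩ := hq0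
  simp only [Finset.mem_filter, Finset.mem_univ, true_and] at ha hb hd
  have key : ∃ i j l, i < j ∧ j < l ∧
      (i < 2 * m + 1 ∧ f (i + 1) = q0) ∧ (j < 2 * m + 1 ∧ f (j + 1) = q0) ∧
      (l < 2 * m + 1 ∧ f (l + 1) = q0) :=
    sort3 (P := fun n => n < 2 * m + 1 ∧ f (n + 1) = q0)
      (fun h => hab (Fin.ext h)) (fun h => had (Fin.ext h)) (fun h => hbd (Fin.ext h))
      ⟨a.isLt, ha⟩ ⟨b.isLt, hb⟩ ⟨d.isLt, hd⟩
  obtain ⟨i0, j0, l0, hij0, hjl0, ⟨hi0, hfi⟩, ⟨hj0, hfj⟩, ⟨hl0, hfl⟩⟩ := key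
  set i := i0 + 1
  set j := j0 + 1
  set l := l0 + 1
  have hil : i < j := by omega
  have hjl : j < l := by omega
  have hl2 : l ≤ 2 * m + 1 := by omega
  have hlw : l ≤ w.length := le_trans hl2 hlen
  -- the four pieces
  refine ⟨w.take i, (w.take j).drop i, (w.take l).drop j, w.drop l, ?_, ?_, ?_, ?_, ?_⟩
  · -- decomposition of w
    have e1 : w.take i ++ (w.take j).drop i = w.take j := by
      conv_lhs => rw [show w.take i = (w.take j).take i by
        rw [List.take_take, min_eq_left (by omega)]]
      exact List.take_append_drop i (w.take j)
    have e2 : w.take j ++ (w.take l).drop j = w.take l := by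
      conv_lhs => rw [show w.take j = (w.take l).take j by
        rw [List.take_take, min_eq_left (by omega)]]
      exact List.take_append_drop j (w.take l)
    rw [e1, e2, List.take_append_drop]
  · -- length bound
    have e1 : w.take i ++ (w.take j).drop i = w.take j := by
      conv_lhs => rw [show w.take i = (w.take j).take i by
        rw [List.take_take, min_eq_left (by omega)]]
      exact List.take_append_drop i (w.take j)
    have e2 : w.take j ++ (w.take l).drop j = w.take l := by
      conv_lhs => rw [show w.take j = (w.take l).take j by
        rw [List.take_take, min_eq_left (by omega)]]
      exact List.take_append_drop j (w.take l)
    rw [e1, e2]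
    simp only [List.length_take]
    omega
  · simp only [List.length_drop, List.length_take]
    omega
  · simp only [List.length_drop, List.length_take]
    omega
  · -- swapped word is accepted
    rw [← hA]
    -- segments
    have h1 : A.Reaches A.start (w.take i) (c i) (f i) := by
      have := hseg 0 i (Nat.zero_le _)
      simpa [hf0, hc0] using this
    have h2 : A.Reaches (f i) ((w.take j).drop i) ((c i)⁻¹ * c j) (f j) := hseg i j (by omega)
    have h3 : A.Reaches (f j) ((w.take l).drop j) ((c j)⁻¹ * c l) (f l) := hseg j l (by omega)
    have h4 : A.Reaches (f l) (w.drop l) ((c l)⁻¹) qf := by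
      have h5 := (hseg l w.length hlw).append hlast
      have hprod : (c l)⁻¹ * c w.length * ((c w.length)⁻¹ * 1) = (c l)⁻¹ := by group
      simpa [List.take_length, hprod] using h5
    -- all cut states are equal to q0
    rw [hfi] at h1 h2
    rw [hfj] at h2 h3
    rw [hfl] at h3 h4
    have total := h1.append (h3.append (h2.append h4))
    refine ⟨qf, hqf, ?_⟩
    have hprod : c i * ((c j)⁻¹ * c l * ((c i)⁻¹ * c j * (c l)⁻¹)) = 1 := by
      have : c i * ((c j)⁻¹ * c l * ((c i)⁻¹ * c j * (c l)⁻¹))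
          = (c i * (c i)⁻¹) * ((c j)⁻¹ * c j) * (c l * (c l)⁻¹) := by
        simp only [mul_assoc, mul_comm, mul_left_comm]
      simp [this]
    rw [hprod] at total
    simpa [List.append_assoc] using total
end

section
/- If w is a seesaw element of swing k with respect to a generator g in a group G with finite generating set X, then every geodesic word over X^{±1} representing w ends with either g^k or g^{−k} (i.e., its final k letters are all g or all g^{−1}). -/
/-- `w` is a seesaw element of swing `k` with respect to the generator `g ∈ S`:
multiplying by `g` (resp. `g⁻¹`) strictly decreases word length for `k` successive
steps, while along the way no other generator or inverse generator decreases the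
word length. -/
def IsSeesaw {G : Type*} [Group G] (S : Set G) (w g : G) (k : ℕ) : Prop :=
  g ∈ S ∧
  (∀ l : ℕ, 1 ≤ l → l ≤ k →
    wordLength S (w * g ^ l) + 1 = wordLength S (w * g ^ (l - 1))) ∧
  (∀ l : ℕ, 1 ≤ l → l ≤ k →
    wordLength S (w * g⁻¹ ^ l) + 1 = wordLength S (w * g⁻¹ ^ (l - 1))) ∧
  (∀ h ∈ S, h ≠ g → h ≠ g⁻¹ →
    wordLength S w ≤ wordLength S (w * h) ∧ wordLength S w ≤ wordLength S (w * h⁻¹)) ∧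
  (∀ m : ℕ, 1 ≤ m → m ≤ k - 1 → ∀ h ∈ S, h ≠ g → h ≠ g⁻¹ →
    wordLength S (w * g ^ m) ≤ wordLength S (w * g ^ m * h) ∧
    wordLength S (w * g ^ m) ≤ wordLength S (w * g ^ m * h⁻¹)) ∧
  (∀ m : ℕ, 1 ≤ m → m ≤ k - 1 → ∀ h ∈ S, h ≠ g⁻¹ → h ≠ g →
    wordLength S (w * g⁻¹ ^ m) ≤ wordLength S (w * g⁻¹ ^ m * h) ∧
    wordLength S (w * g⁻¹ ^ m) ≤ wordLength S (w * g⁻¹ ^ m * h⁻¹))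

lemma wordLength_le' {G : Type*} [Group G] (S : Set G) (v : G) (l : List G)
    (hmem : ∀ x ∈ l, x ∈ S ∨ x⁻¹ ∈ S) (hprod : l.prod = v) :
    wordLength S v ≤ l.length :=
  Nat.sInf_le ⟨l, hmem, rfl, hprod⟩

lemma peel_aux {G : Type*} [Group G] (S : Set G) (w c : G) (k : ℕ)
    (hchain : ∀ l : ℕ, 1 ≤ l → l ≤ k →
      wordLength S (w * c ^ l) + 1 = wordLength S (w * c ^ (l - 1)))
    (hside : ∀ m : ℕ, 1 ≤ m → m ≤ k - 1 → ∀ h ∈ S, h ≠ c → h ≠ c⁻¹ →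
      wordLength S (w * c ^ m) ≤ wordLength S (w * c ^ m * h) ∧
      wordLength S (w * c ^ m) ≤ wordLength S (w * c ^ m * h⁻¹))
    (l : List G) (hmem : ∀ x ∈ l, x ∈ S ∨ x⁻¹ ∈ S)
    (hprod : l.prod = w) (hlen : l.length = wordLength S w)
    (hne : l ≠ []) (hlast : l.getLast hne = c⁻¹) :
    ∀ m, 1 ≤ m → m ≤ k → ∃ t : List G, l = t ++ List.replicate m c⁻¹ ∧
      (∀ x ∈ t, x ∈ S ∨ x⁻¹ ∈ S) ∧ t.prod = w * c ^ m ∧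
      t.length = wordLength S (w * c ^ m) := by
  intro m hm1
  induction m, hm1 using Nat.le_induction with
  | base =>
    intro hk
    refine ⟨l.dropLast, ?_, ?_, ?_, ?_⟩
    · simpa [hlast] using (List.dropLast_append_getLast hne).symm
    · intro x hx; exact hmem x (List.dropLast_subset l hx)
    · have h1 : l.dropLast.prod * c⁻¹ = w := by
        have := List.dropLast_append_getLast hne
        calc l.dropLast.prod * c⁻¹ = (l.dropLast ++ [l.getLast hne]).prod := by
              simp [List.prod_append, hlast]
          _ = w := by rw [this, hprod]
      have : l.dropLast.prod = w * c := by
        have := congrArg (· * c) h1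
        simpa [mul_assoc] using this
      simpa [pow_one] using this
    · have hc1 := hchain 1 le_rfl hk
      simp only [pow_one, Nat.sub_self, pow_zero, mul_one] at hc1
      rw [List.length_dropLast, hlen, pow_one]
      omega
  | succ n hn ih =>
    intro hk
    obtain ⟨t, hlt, htmem, htprod, htlen⟩ := ih (by omega)
    have hcn1 := hchain (n + 1) (by omega) hk
    simp only [Nat.add_sub_cancel] at hcn1
    have htne : t ≠ [] := by
      intro h
      rw [h] at htlen
      simp at htlen
      omega
    set x := t.getLast htne with hx
    have hsplit : t.dropLast ++ [x] = t := List.dropLast_append_getLast htne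
    have hdmem : ∀ y ∈ t.dropLast, y ∈ S ∨ y⁻¹ ∈ S := fun y hy =>
      htmem y (List.dropLast_subset t hy)
    have hdprod : t.dropLast.prod = w * c ^ n * x⁻¹ := by
      have : t.dropLast.prod * x = w * c ^ n := by
        rw [← htprod, ← hsplit]; simp [List.prod_append]
      have := congrArg (· * x⁻¹) this
      simpa [mul_assoc] using this
    have hdlen : t.dropLast.length = t.length - 1 := List.length_dropLast (xs := t)
    have hle : wordLength S (w * c ^ n * x⁻¹) ≤ t.length - 1 := by
      rw [← hdlen]; exact wordLength_le' S _ _ hdmem hdprod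
    have hxc : x = c⁻¹ := by
      by_contra hxne
      rcases eq_or_ne x c with hxc | hxc
      · -- x = c : prefix is w * c^(n-1), longer
        have hcn := hchain n hn (by omega)
        have hprev : w * c ^ n * x⁻¹ = w * c ^ (n - 1) := by
          rw [hxc]
          have : c ^ n = c ^ (n - 1) * c := by
            rw [← pow_succ]; congr 1; omega
          rw [this, ← mul_assoc, mul_assoc, mul_assoc]; simp
        rw [hprev] at hle
        omega
      · rcases htmem x (by rw [← hsplit]; simp) with hxS | hxS
        · have := (hside n hn (by omega) x hxS hxc hxne).2
          omega
        · have hne2 : x⁻¹ ≠ c := by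
            intro h; apply hxne; rw [← h, inv_inv]
          have := (hside n hn (by omega) x⁻¹ hxS hne2 (fun h => hxc (inv_injective h))).1
          omega
    refine ⟨t.dropLast, ?_, hdmem, ?_, ?_⟩
    · rw [hlt, ← hsplit, hxc]
      simp [List.replicate_succ]
    · rw [hdprod, hxc, inv_inv, pow_succ, ← mul_assoc]
    · omega

/-- Every geodesic word representing a seesaw element of swing `k` with respect to `g`
ends with `g^k` or `g^{-k}`. -/
theorem seesaw_geodesic_suffix {G : Type*} [Group G] (S : Set G) (w g : G) (k : ℕ)
    (hw : IsSeesaw S w g k) (l : List G) (hmem : ∀ x ∈ l, x ∈ S ∨ x⁻¹ ∈ S)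
    (hprod : l.prod = w) (hlen : l.length = wordLength S w) :
    ∃ l' : List G, l = l' ++ List.replicate k g ∨ l = l' ++ List.replicate k g⁻¹ := by
  unfold IsSeesaw at hw
  obtain ⟨hgS, hcg, hcgi, hbase, hsg, hsgi⟩ := hw
  rcases Nat.eq_zero_or_pos k with hk0 | hkpos
  · exact ⟨l, Or.inl (by simp [hk0])⟩
  · have hc1 := hcgi 1 le_rfl hkpos
    simp only [pow_one, Nat.sub_self, pow_zero, mul_one] at hc1
    have hlne : l ≠ [] := by
      intro h
      rw [h] at hlen; simp at hlen; omega
    set x := l.getLast hlne with hx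
    have hsplit : l.dropLast ++ [x] = l := List.dropLast_append_getLast hlne
    have hdmem : ∀ y ∈ l.dropLast, y ∈ S ∨ y⁻¹ ∈ S := fun y hy =>
      hmem y (List.dropLast_subset l hy)
    have hdprod : l.dropLast.prod = w * x⁻¹ := by
      have : l.dropLast.prod * x = w := by
        rw [← hprod, ← hsplit]; simp [List.prod_append]
      have := congrArg (· * x⁻¹) this
      simpa [mul_assoc] using this
    have hle : wordLength S (w * x⁻¹) ≤ l.length - 1 := by
      have := wordLength_le' S _ _ hdmem hdprod
      rwa [List.length_dropLast] at this
    have hxg : x = g ∨ x = g⁻¹ := by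
      by_contra hxne
      push_neg at hxne
      obtain ⟨h1, h2⟩ := hxne
      rcases hmem x (by rw [← hsplit]; simp) with hxS | hxS
      · have := (hbase x hxS h1 h2).2
        omega
      · have e1 : x⁻¹ ≠ g := fun h => h2 (by rw [← h, inv_inv])
        have e2 : x⁻¹ ≠ g⁻¹ := fun h => h1 (by
          have := congrArg (·⁻¹) h; simpa using this)
        have := (hbase x⁻¹ hxS e1 e2).1
        omega
    rcases hxg with hxg | hxg
    · obtain ⟨t, ht, -, -, -⟩ := peel_aux S w g⁻¹ k hcgi
        (by simpa using hsgi) l hmem hprod hlen hlne (by rw [← hx, hxg]; simp)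
        k hkpos le_rfl
      exact ⟨t, Or.inl (by simpa using ht)⟩
    · obtain ⟨t, ht, -, -, -⟩ := peel_aux S w g k hcg hsg l hmem hprod hlen hlne
        (by rw [← hx, hxg]) k hkpos le_rfl
      exact ⟨t, Or.inr ht⟩
end

section
/- Let G be a group with finite generating set X containing seesaw elements of arbitrarily large swing with respect to X. Then G has infinitely many cone types with respect to X. -/
lemma seesaw_pow_len {G : Type*} [Group G] (S : Set G) {w g : G} {k : ℕ}
    (h : IsSeesaw S w g k) : ∀ m ≤ k, wordLength S (w * g ^ m) + m = wordLength S w := by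
  intro m hm
  induction m with
  | zero => simp
  | succ n ih =>
    have h2 := h.2.1 (n + 1) (by omega) hm
    simp only [Nat.add_sub_cancel] at h2
    have := ih (by omega)
    omega

lemma seesaw_mem_cone {G : Type*} [Group G] (S : Set G) {w g : G} {k : ℕ}
    (h : IsSeesaw S w g k) {j : ℕ} (hj : j ≤ k) :
    List.replicate j g⁻¹ ∈ coneType S (w * g ^ j) := by
  constructor
  · intro x hx
    rw [List.eq_of_mem_replicate hx]
    right; simpa using h.1
  · intro l hl
    rw [List.length_replicate] at hl
    have hkey : w * g ^ j * ((List.replicate j g⁻¹).take l).prod = w * g ^ (j - l) := by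
      rw [List.take_replicate, min_eq_left hl, List.prod_replicate, inv_pow]
      have : g ^ j = g ^ (j - l) * g ^ l := by
        rw [← pow_add, Nat.sub_add_cancel hl]
      rw [this, mul_assoc w, mul_assoc, mul_inv_cancel, mul_one]
    rw [hkey]
    have h1 := seesaw_pow_len S h (j - l) (by omega)
    have h2 := seesaw_pow_len S h j hj
    omega

lemma seesaw_cone_ne {G : Type*} [Group G] (S : Set G) {w g : G} {k : ℕ}
    (h : IsSeesaw S w g k) {i j : ℕ} (hij : i < j) (hj : j ≤ k) :
    coneType S (w * g ^ i) ≠ coneType S (w * g ^ j) := by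
  intro he
  have hmem := seesaw_mem_cone S h hj
  rw [← he] at hmem
  have hthis := hmem.2 (i + 1) (by rw [List.length_replicate]; omega)
  have hkey : w * g ^ i * ((List.replicate j g⁻¹).take (i + 1)).prod = w * g⁻¹ := by
    rw [List.take_replicate, min_eq_left (by omega : i + 1 ≤ j), List.prod_replicate]
    group
  rw [hkey] at hthis
  have h3 := h.2.2.1 1 le_rfl (by omega)
  simp only [pow_one, pow_zero, mul_one, Nat.sub_self] at h3
  have h4 := seesaw_pow_len S h i (by omega)
  omega

/-- A group with a finite generating set admitting seesaw elements of arbitrarily large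
swing has infinitely many cone types. -/
theorem seesaw_infinitely_many_cone_types {G : Type*} [Group G] (S : Set G)
    (hS : S.Finite) (hseesaw : ∀ k : ℕ, ∃ w g : G, IsSeesaw S w g k) :
    Set.Infinite (Set.range (coneType S)) := by
  intro hfin
  set N := hfin.toFinset.card with hN
  obtain ⟨w, g, hsw⟩ := hseesaw N
  have hmaps : ∀ i : Fin (N + 1), i ∈ (Finset.univ : Finset (Fin (N + 1))) →
      coneType S (w * g ^ (i : ℕ)) ∈ hfin.toFinset := by
    intro i _
    rw [Set.Finite.mem_toFinset]
    exact ⟨w * g ^ (i : ℕ), rfl⟩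
  have hinj : Set.InjOn (fun i : Fin (N + 1) => coneType S (w * g ^ (i : ℕ)))
      (Finset.univ : Finset (Fin (N + 1))) := by
    intro i _ j _ heq
    by_contra hne
    rcases lt_or_gt_of_ne (fun hv : (i : ℕ) = (j : ℕ) => hne (Fin.ext hv)) with hlt | hgt
    · exact seesaw_cone_ne S hsw hlt (by omega) heq
    · exact seesaw_cone_ne S hsw hgt (by omega) heq.symm
  have hcard := Finset.card_le_card_of_injOn _ hmaps hinj
  simp only [Finset.card_univ, Fintype.card_fin] at hcard
  omega
end
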